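/- arXiv:0711.1683 — 12 statements merged into one kernel-verified Lean document; each statement's English description precedes it below -/
import Mathlib

section
/- Let K be a category, κ an infinite cardinal, and u a Fraïssé sequence of length κ in K. Then K has the joint embedding property. Moreover, u has the extension property if and only if K has the amalgamation property. -/
open CategoryTheory

universe w v u

/-- The index set of ordinals below `κ`, used to index inductive sequences of length `κ`. -/
abbrev Idx (κ : Ordinal.{w}) : Type (w + 1) := {ξ : Ordinal.{w} // ξ < κ}

/-- An inductive sequence indexed by a preorder `I` (e.g. `Idx κ`) is a functor `I ⥤ C`.
It is a Fraïssé sequence if it is cofinal (U) and has the amalgamation property (A). -/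
def IsFraisseSeq {C : Type u} [Category.{v} C] {I : Type*} [Preorder I] (F : I ⥤ C) : Prop :=
  (∀ x : C, ∃ ξ : I, Nonempty (x ⟶ F.obj ξ)) ∧
  (∀ (ξ : I) (y : C) (f : F.obj ξ ⟶ y),
    ∃ (η : I) (h : ξ ≤ η) (g : y ⟶ F.obj η), f ≫ g = F.map (homOfLE h))

/-- Condition (E): the extension property of a sequence. -/
def HasExtProp {C : Type u} [Category.{v} C] {I : Type*} [Preorder I] (F : I ⥤ C) : Prop :=
  ∀ (a b : C) (f : a ⟶ b) (α : I) (g : a ⟶ F.obj α),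
    ∃ (β : I) (h : α ≤ β) (k : b ⟶ F.obj β), g ≫ F.map (homOfLE h) = f ≫ k

/-- The amalgamation property of a category. -/
def AmalgProp (C : Type u) [Category.{v} C] : Prop :=
  ∀ (a b c : C) (f : a ⟶ b) (g : a ⟶ c),
    ∃ (d : C) (f' : b ⟶ d) (g' : c ⟶ d), f ≫ f' = g ≫ g'

/-- The joint embedding property of a category. -/
def JointEmbProp (C : Type u) [Category.{v} C] : Prop :=
  ∀ a b : C, ∃ d : C, Nonempty (a ⟶ d) ∧ Nonempty (b ⟶ d)

/-- if `u` is a Fraïssé sequence of length `κ` (an infinite cardinal) in `K`,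
then `K` has the joint embedding property, and `u` has the extension property iff `K` has
the amalgamation property. -/
theorem fraisseSeq_jointEmb_and_extProp_iff_amalg
    {C : Type u} [Category.{v} C] (κ : Cardinal.{w}) (hκ : Cardinal.aleph0 ≤ κ)
    (u : Idx κ.ord ⥤ C) (hu : IsFraisseSeq u) :
    JointEmbProp C ∧ (HasExtProp u ↔ AmalgProp C) := by
  obtain ⟨hU, hA⟩ := hu
  constructor
  · intro a b
    obtain ⟨ξ, ⟨fa⟩⟩ := hU a
    obtain ⟨η, ⟨fb⟩⟩ := hU b
    refine ⟨u.obj (max ξ η), ⟨fa ≫ u.map (homOfLE (le_max_left ξ η))⟩,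
      ⟨fb ≫ u.map (homOfLE (le_max_right ξ η))⟩⟩
  constructor
  · intro hE a b c f g
    obtain ⟨α, ⟨t⟩⟩ := hU c
    obtain ⟨β, h, k, hk⟩ := hE a b f α (g ≫ t)
    exact ⟨u.obj β, k, t ≫ u.map (homOfLE h), by rw [← hk, Category.assoc]⟩
  · intro hAm a b f α g
    obtain ⟨d, f', g', hd⟩ := hAm a b (u.obj α) f g
    obtain ⟨η, h, k, hk⟩ := hA α d g'
    refine ⟨η, h, f' ≫ k, ?_⟩
    rw [← hk, ← Category.assoc, ← hd, Category.assoc]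
end

section
/- Let K be a category, let u be an inductive sequence of length κ in K (κ an infinite cardinal), and let S ⊆ κ be unbounded in κ. Then: (a) if u is a Fraïssé sequence in K, then the restricted sequence u↾S (indexed by S with the induced bonding arrows) is a Fraïssé sequence in K; (b) if K has the amalgamation property and u↾S is a Fraïssé sequence in K, then u is a Fraïssé sequence in K. -/
/-!
Cofinality of `S` moves any witness for (U) or (A) of `u` up into `S` by composing with a
bonding arrow, which gives (a). For (b), an arrow `f : u ξ ⟶ y` is first amalgamated with the
bonding arrow `u ξ ⟶ u η` to some `η ∈ S`; property (A) of `u ↾ S` applied to the leg out of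
`u η` then absorbs the amalgam back into the sequence.
-/

open CategoryTheory

universe w v u

/-- The restriction of a sequence `u` to a subset `S` of its index set, with the induced
bonding arrows. -/
def restrictSeq {C : Type u} [Category.{v} C] {κ : Ordinal.{w}} (u : Idx κ ⥤ C)
    (S : Set (Idx κ)) : S ⥤ C :=
  (Monotone.functor (f := (Subtype.val : S → Idx κ)) fun _ _ h => h) ⋙ u

lemma CategoryTheory.Functor.map_homOfLE_comp {C : Type*} [Category C] {I : Type*} [Preorder I]
    (u : I ⥤ C) {i j k : I} (hij : i ≤ j) (hjk : j ≤ k) :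
    u.map (homOfLE hij) ≫ u.map (homOfLE hjk) = u.map (homOfLE (hij.trans hjk)) := by
  rw [← u.map_comp, homOfLE_comp]

namespace IsFraisseSeq

variable {C : Type*} [Category C] {I : Type*} [Preorder I] {u : I ⥤ C} {S : Set I}

lemma restrict_iff :
    IsFraisseSeq ((Subtype.mono_coe (· ∈ S)).functor ⋙ u) ↔
      (∀ x : C, ∃ (i : I) (_ : i ∈ S), Nonempty (x ⟶ u.obj i)) ∧
      ∀ i ∈ S, ∀ (y : C) (f : u.obj i ⟶ y),
        ∃ (j : I) (_ : j ∈ S) (hij : i ≤ j) (g : y ⟶ u.obj j), f ≫ g = u.map (homOfLE hij) := by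
  simp only [IsFraisseSeq, Subtype.exists, Subtype.forall]
  rfl

lemma restrict (hS : IsCofinal S) (hu : IsFraisseSeq u) :
    IsFraisseSeq ((Subtype.mono_coe (· ∈ S)).functor ⋙ u) := by
  obtain ⟨hU, hA⟩ := hu
  refine restrict_iff.2 ⟨fun x => ?_, fun i _ y f => ?_⟩
  · obtain ⟨i, ⟨f⟩⟩ := hU x
    obtain ⟨j, hj, hij⟩ := hS i
    exact ⟨j, hj, ⟨f ≫ u.map (homOfLE hij)⟩⟩
  · obtain ⟨j, hij, g, hg⟩ := hA i y f
    obtain ⟨k, hk, hjk⟩ := hS j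
    refine ⟨k, hk, hij.trans hjk, g ≫ u.map (homOfLE hjk), ?_⟩
    rw [← Category.assoc, hg, u.map_homOfLE_comp]

lemma of_restrict (hS : IsCofinal S) (hC : AmalgProp C)
    (hu : IsFraisseSeq ((Subtype.mono_coe (· ∈ S)).functor ⋙ u)) : IsFraisseSeq u := by
  obtain ⟨hU, hA⟩ := restrict_iff.1 hu
  refine ⟨fun x => ?_, fun i y f => ?_⟩
  · obtain ⟨i, -, hx⟩ := hU x
    exact ⟨i, hx⟩
  · obtain ⟨j, hj, hij⟩ := hS i
    obtain ⟨d, f', g', hd⟩ := hC _ _ _ f (u.map (homOfLE hij))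
    obtain ⟨k, -, hjk, g, hg⟩ := hA j hj d g'
    refine ⟨k, hij.trans hjk, f' ≫ g, ?_⟩
    rw [← Category.assoc, hd, Category.assoc, hg, u.map_homOfLE_comp]

end IsFraisseSeq

theorem restrictSeq_isFraisse_iff_general
    {C : Type u} [Category.{v} C] (κ : Cardinal.{w})
    (u : Idx κ.ord ⥤ C) (S : Set (Idx κ.ord))
    (hS : ∀ ξ : Idx κ.ord, ∃ η ∈ S, ξ ≤ η) :
    (IsFraisseSeq u → IsFraisseSeq (restrictSeq u S)) ∧
    (AmalgProp C → IsFraisseSeq (restrictSeq u S) → IsFraisseSeq u) :=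
  ⟨IsFraisseSeq.restrict hS, fun hC => IsFraisseSeq.of_restrict hS hC⟩

/-- for `u` an inductive sequence of length `κ` (an infinite cardinal) and
`S ⊆ κ` unbounded: (a) if `u` is Fraïssé then so is `u ↾ S`; (b) if `K` has the amalgamation
property and `u ↾ S` is Fraïssé, then so is `u`. -/
theorem restrictSeq_isFraisse_iff
    {C : Type u} [Category.{v} C] (κ : Cardinal.{w}) (hκ : Cardinal.aleph0 ≤ κ)
    (u : Idx κ.ord ⥤ C) (S : Set (Idx κ.ord))
    (hS : ∀ ξ : Idx κ.ord, ∃ η ∈ S, ξ ≤ η) :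
    (IsFraisseSeq u → IsFraisseSeq (restrictSeq u S)) ∧
    (AmalgProp C → IsFraisseSeq (restrictSeq u S) → IsFraisseSeq u) :=
  restrictSeq_isFraisse_iff_general κ u S hS
end

section
/- Assume u and v are Fraïssé objects in a category K. Then u and v are isomorphic. If moreover all arrows of K are monomorphisms, then every arrow f : u → x out of a Fraïssé object u is an isomorphism. -/
open CategoryTheory

universe v u

/-- A Fraïssé object in a category `C`: every object admits an arrow into `u`, and every
arrow out of `u` has a left inverse compatible with the identity of `u`. -/
def IsFraisseObj (C : Type u) [Category.{v} C] (u : C) : Prop :=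
  (∀ x : C, Nonempty (x ⟶ u)) ∧
  (∀ (x : C) (f : u ⟶ x), ∃ g : x ⟶ u, f ≫ g = 𝟙 u)

/-- any two Fraïssé objects are isomorphic; moreover, if all arrows of the
category are monomorphisms, then every arrow out of a Fraïssé object is an isomorphism. -/
theorem fraisseObj_iso {C : Type u} [Category.{v} C] (u v : C)
    (hu : IsFraisseObj C u) (hv : IsFraisseObj C v) :
    Nonempty (u ≅ v) ∧
    ((∀ (x y : C) (f : x ⟶ y), Mono f) → ∀ (x : C) (f : u ⟶ x), IsIso f) := by
  constructor
  · obtain ⟨f⟩ := hv.1 u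
    obtain ⟨g, hg⟩ := hu.2 v f
    obtain ⟨h, hh⟩ := hv.2 u g
    have : h = f := by
      calc h = (f ≫ g) ≫ h := by rw [hg]; simp
        _ = f := by rw [Category.assoc, hh]; simp
    exact ⟨⟨f, g, hg, by rw [← this]; exact hh⟩⟩
  · intro hm x f
    obtain ⟨g, hg⟩ := hu.2 x f
    refine ⟨g, hg, ?_⟩
    have := hm x u g
    rw [← cancel_mono g, Category.assoc, hg, Category.id_comp, Category.comp_id]
end

section
/- Let κ be an infinite regular cardinal and let K be a κ-bounded category which has the amalgamation property and the joint embedding property. Assume further that F is a dominating family of arrows of K with |F| ≤ κ. Then there exists a Fraïssé sequence of length κ in K. -/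
open CategoryTheory

universe w v u

/-- A category is `κ`-bounded if every inductive sequence of length `< κ` admits a cocone. -/
def KappaBounded (C : Type u) [Category.{v} C] (κ : Cardinal.{w}) : Prop :=
  ∀ lam : Ordinal.{w}, lam < κ.ord → ∀ x : Idx lam ⥤ C,
    ∃ (y : C) (c : ∀ α : Idx lam, x.obj α ⟶ y),
      ∀ (α β : Idx lam) (h : α ≤ β), x.map (homOfLE h) ≫ c β = c α

/-- A family `F` of arrows of `C` is dominating if (D1) the domains of members of `F` form
a cofinal family of objects, and (D2) every arrow out of such a domain can be extended, by
composing with a further arrow, to a member of `F`. -/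
def Dominating {C : Type u} [Category.{v} C] (F : Set (Arrow C)) : Prop :=
  (∀ x : C, ∃ f ∈ F, Nonempty (x ⟶ f.left)) ∧
  (∀ f ∈ F, ∀ (x : C) (g : f.left ⟶ x), ∃ (w : C) (h : x ⟶ w), Arrow.mk (g ≫ h) ∈ F)


/-!
The sequence is built by transfinite recursion as a compatible family of functors on the initial
segments `Set.Iic j`, all of whose objects lie in `Dom F`. Limit stages are closed off by
κ-boundedness. At the successor of `γ` one task `τ γ = (α, a)` is carried out: `a.left` is embedded
into the new object (joint embedding) and, if `a` starts at `u_α`, the bonding arrow out of `u_α`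
is made to factor through `a` (amalgamation). Since there are at most `κ` tasks, a bookkeeping `τ`
can revisit every task cofinally often. Then (U) follows from (D1), and for (A) an arrow
`f : u_ξ ⟶ y` is first extended by (D2) to a member of `F`, which is a task handled later.
-/

open Limits SmallObject SuccStruct Opposite

namespace Fraisse

variable {C : Type u} [Category.{v} C]

section Arrows

lemma arrow_mk_comp_congr {X Y Z X' Y' Z' : C} {φ : X ⟶ Y} {ψ : Y ⟶ Z} {φ' : X' ⟶ Y'}
    {ψ' : Y' ⟶ Z'} (h₁ : Arrow.mk φ = Arrow.mk φ') (h₂ : Arrow.mk ψ = Arrow.mk ψ') :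
    Arrow.mk (φ ≫ ψ) = Arrow.mk (φ' ≫ ψ') := by
  obtain ⟨rfl, rfl, rfl⟩ := (Arrow.mk_eq_mk_iff _ _).1 h₁
  obtain ⟨-, rfl, rfl⟩ := (Arrow.mk_eq_mk_iff _ _).1 h₂
  simp

def dom (F : Set (Arrow C)) : Set C := (fun a => a.left) '' F

/-- Condition (A) for the bonding arrow `φ` and the arrow `a`. Testing all `f` with
`Arrow.mk f = a` avoids transporting `a` along an equality `a.left = φ.left` of objects. -/
def Absorbs (φ a : Arrow C) : Prop :=
  ∀ ⦃Y : C⦄ (f : φ.left ⟶ Y), Arrow.mk f = a → ∃ g : Y ⟶ φ.right, f ≫ g = φ.hom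

lemma Absorbs.comp {X₀ X Z : C} {φ : X₀ ⟶ X} {a : Arrow C} (h : Absorbs (Arrow.mk φ) a)
    (t : X ⟶ Z) : Absorbs (Arrow.mk (φ ≫ t)) a := fun Y f hf => by
  obtain ⟨g, hg⟩ := h f hf
  exact ⟨g ≫ t, by simp [reassoc_of% hg]⟩

lemma exists_absorbs {F : Set (Arrow C)} (hamalg : AmalgProp C) (hjep : JointEmbProp C)
    (hdom : Dominating F) {X₀ X : C} (φ : X₀ ⟶ X) (a : Arrow C) :
    ∃ (Z : C) (t : X ⟶ Z), Z ∈ dom F ∧ Nonempty (a.left ⟶ Z) ∧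
      Absorbs (Arrow.mk (φ ≫ t)) a := by
  obtain ⟨Z, t, ⟨e⟩, habs⟩ : ∃ (Z : C) (t : X ⟶ Z), Nonempty (a.left ⟶ Z) ∧
      Absorbs (Arrow.mk (φ ≫ t)) a := by
    by_cases ha : ∃ (Y : C) (f : X₀ ⟶ Y), Arrow.mk f = a
    · obtain ⟨Y, f, rfl⟩ := ha
      obtain ⟨Z, f', t, hw⟩ := hamalg _ _ _ f φ
      refine ⟨Z, t, ⟨φ ≫ t⟩, fun Y' f'' hf'' => ?_⟩
      obtain rfl : Y' = Y := congrArg Arrow.right hf''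
      obtain rfl := Arrow.mk_injective _ _ hf''
      exact ⟨f', hw⟩
    · obtain ⟨Z, ⟨t⟩, ⟨e⟩⟩ := hjep X a.left
      exact ⟨Z, t, ⟨e⟩, fun Y f hf => (ha ⟨Y, f, hf⟩).elim⟩
  obtain ⟨b, hb, ⟨t'⟩⟩ := hdom.1 Z
  exact ⟨b.left, t ≫ t', ⟨b, hb, rfl⟩, ⟨e ≫ t'⟩, by simpa using habs.comp t'⟩

lemma _root_.Dominating.exists_comp_mem {F : Set (Arrow C)} (hdom : Dominating F) {X Y : C}
    (hX : X ∈ dom F) (f : X ⟶ Y) : ∃ (Z : C) (h : Y ⟶ Z), Arrow.mk (f ≫ h) ∈ F := by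
  obtain ⟨b, hb, rfl⟩ := hX
  exact hdom.2 b hb Y f

end Arrows

section InitialSegments

variable {J : Type*} [LinearOrder J]

section Restriction

variable {i j : J} {hij : i ≤ j} {G : Set.Iic j ⥤ C} {G' : Set.Iic i ⥤ C}
  (hG : restrictionLE G hij = G')
include hG

lemma obj_eq_of_restrictionLE_eq {k : J} (hk : k ≤ i) :
    G'.obj ⟨k, hk⟩ = G.obj ⟨k, hk.trans hij⟩ := by
  subst hG; rfl

lemma map_eq_of_restrictionLE_eq {k₁ k₂ : J} (h₁₂ : k₁ ≤ k₂) (h₂ : k₂ ≤ i) :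
    G'.map (homOfLE h₁₂ : ⟨k₁, h₁₂.trans h₂⟩ ⟶ ⟨k₂, h₂⟩) =
      eqToHom (obj_eq_of_restrictionLE_eq hG _) ≫ G.map (homOfLE h₁₂) ≫
        eqToHom (obj_eq_of_restrictionLE_eq hG h₂).symm :=
  Functor.congr_hom hG.symm _

end Restriction

section Glue

variable {K : Type*} [Preorder K] (f : K ↪o J) (G : ∀ k, Set.Iic (f k) ⥤ C)
  (hG : ∀ ⦃k k'⦄ (h : k ≤ k'), restrictionLE (G k') (f.le_iff_le.2 h) = G k)

def glue : K ⥤ C where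
  obj k := (G k).obj ⟨f k, le_rfl⟩
  map {k k'} h := eqToHom (obj_eq_of_restrictionLE_eq (hG (leOfHom h)) le_rfl) ≫
    (G k').map (homOfLE (f.le_iff_le.2 (leOfHom h)))
  map_id k := by simp
  map_comp {k₁ k₂ k₃} h₁₂ h₂₃ := by
    simp [map_eq_of_restrictionLE_eq (hG (leOfHom h₂₃)), ← Functor.map_comp]

lemma arrow_mk_glue_map {k k' : K} (h : k ≤ k') :
    Arrow.mk ((glue f G hG).map (homOfLE h)) =
      arrowMap (G k') (f k) (f k') (f.le_iff_le.2 h) le_rfl := by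
  simp [glue, arrowMap]

end Glue

section ExtendToSucc

variable [SuccOrder J] {j : J} (hj : ¬IsMax j) (G : Set.Iic j ⥤ C) {X : C}
  (t : G.obj ⟨j, le_rfl⟩ ⟶ X)

lemma restrictionLE_extendToSucc : restrictionLE (extendToSucc hj G t) (Order.le_succ j) = G :=
  Arrow.functor_ext fun ⟨_, _⟩ ⟨k, hk⟩ f => arrowMap_extendToSucc hj G t _ k (leOfHom f) hk

lemma arrowMap_extendToSucc_succ {i : J} (hi : i ≤ j) :
    arrowMap (extendToSucc hj G t) i (Order.succ j) (hi.trans (Order.le_succ j)) le_rfl =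
      Arrow.mk (G.map (homOfLE hi : ⟨i, hi⟩ ⟶ ⟨j, le_rfl⟩) ≫ t) := by
  calc _ = Arrow.mk ((extendToSucc hj G t).map (homOfLE hi :
        (⟨i, Set.mem_Iic.2 (hi.trans (Order.le_succ j))⟩ : Set.Iic (Order.succ j)) ⟶
          ⟨j, Set.mem_Iic.2 (Order.le_succ j)⟩) ≫
        (extendToSucc hj G t).map (homOfLE (Order.le_succ j) :
          (⟨j, Set.mem_Iic.2 (Order.le_succ j)⟩ : Set.Iic (Order.succ j)) ⟶
            ⟨Order.succ j, Set.mem_Iic.2 le_rfl⟩)) :=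
        congrArg Arrow.mk (Functor.map_comp _ _ _)
    _ = _ := arrow_mk_comp_congr (arrowMap_extendToSucc hj G t i j hi le_rfl)
        (arrowSucc_extendToSucc hj G t)

end ExtendToSucc

end InitialSegments

section Stages

variable {J : Type*} [LinearOrder J] [SuccOrder J] (F : Set (Arrow C)) (τ : J → J × Arrow C)

/-- The conditions imposed at stage `j` of the construction; at the successor of `γ` the
task `τ γ = (α, a)` is carried out. -/
structure IsGoodAt {j : J} (G : Set.Iic j ⥤ C) : Prop where
  top_mem : G.obj ⟨j, le_rfl⟩ ∈ dom F
  embeds : ∀ γ, Order.succ γ = j → Nonempty ((τ γ).2.left ⟶ G.obj ⟨j, le_rfl⟩)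
  absorbs : ∀ γ (hγ : Order.succ γ = j) (hα : (τ γ).1 ≤ γ),
    Absorbs (arrowMap G (τ γ).1 j (hα.trans (hγ ▸ Order.le_succ γ)) le_rfl) (τ γ).2

def IsGood {j : J} (G : Set.Iic j ⥤ C) : Prop :=
  ∀ i (hi : i ≤ j), IsGoodAt F τ (restrictionLE G hi)

variable {F τ}

lemma IsGood.restrictionLE {i j : J} {G : Set.Iic j ⥤ C} (hG : IsGood F τ G) (hij : i ≤ j) :
    IsGood F τ (restrictionLE G hij) :=
  fun k hk => hG k (hk.trans hij)

lemma isGood_of_lt {j : J} {G : Set.Iic j ⥤ C}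
    (hlt : ∀ i (hi : i < j), IsGoodAt F τ (restrictionLE G hi.le)) (htop : IsGoodAt F τ G) :
    IsGood F τ G := by
  intro i hi
  obtain hi | rfl := hi.lt_or_eq
  · exact hlt i hi
  · exact htop

variable (F τ) in
def goodFunctors : Jᵒᵖ ⥤ Type _ where
  obj j := {G : Set.Iic j.unop ⥤ C // IsGood F τ G}
  map f := TypeCat.ofHom fun G => ⟨restrictionLE G.1 (leOfHom f.unop), G.2.restrictionLE _⟩

variable [NoMaxOrder J]

lemma exists_isGood_succ (hamalg : AmalgProp C) (hjep : JointEmbProp C) (hdom : Dominating F)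
    {j : J} {G : Set.Iic j ⥤ C} (hG : IsGood F τ G) :
    ∃ G' : Set.Iic (Order.succ j) ⥤ C, IsGood F τ G' ∧ restrictionLE G' (Order.le_succ j) = G := by
  obtain ⟨Z, t, hZ, ⟨e⟩, habs⟩ : ∃ (Z : C) (t : G.obj ⟨j, le_rfl⟩ ⟶ Z), Z ∈ dom F ∧
      Nonempty ((τ j).2.left ⟶ Z) ∧ ∀ hα : (τ j).1 ≤ j,
        Absorbs (Arrow.mk (G.map (homOfLE hα : (⟨_, hα⟩ : Set.Iic j) ⟶ ⟨j, le_rfl⟩) ≫ t))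
          (τ j).2 := by
    by_cases hα : (τ j).1 ≤ j
    · obtain ⟨Z, t, h⟩ := exists_absorbs hamalg hjep hdom
        (G.map (homOfLE hα : (⟨_, hα⟩ : Set.Iic j) ⟶ ⟨j, le_rfl⟩)) (τ j).2
      exact ⟨Z, t, h.1, h.2.1, fun _ => h.2.2⟩
    · obtain ⟨Z, t, h⟩ := exists_absorbs hamalg hjep hdom (𝟙 _) (τ j).2
      exact ⟨Z, t, h.1, h.2.1, fun h' => (hα h').elim⟩
  have hj := not_isMax j
  have hres := restrictionLE_extendToSucc hj G t
  have htop := extendToSucc_obj_succ_eq hj G t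
  refine ⟨extendToSucc hj G t, isGood_of_lt (fun i hi => ?_)
    ⟨?_, fun γ hγ => ?_, fun γ hγ hα => ?_⟩, hres⟩
  · have h := hG i (Order.lt_succ_iff.1 hi)
    rw [← hres] at h
    exact h
  · rw [← htop] at hZ
    exact hZ
  · obtain rfl := Order.succ_injective hγ
    exact ⟨e ≫ eqToHom htop.symm⟩
  · obtain rfl := Order.succ_injective hγ
    rw [arrowMap_extendToSucc_succ hj G t hα]
    exact habs hα

lemma exists_isGood_limit (hcocone : ∀ (j : J) (G : Set.Iio j ⥤ C), Nonempty (Cocone G))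
    (hdom : Dominating F) {j : J} (hj : Order.IsSuccLimit j)
    (G : ∀ i : Set.Iio j, Set.Iic i.1 ⥤ C) (hgood : ∀ i, IsGood F τ (G i))
    (hG : ∀ ⦃i i'⦄ (h : i ≤ i'), restrictionLE (G i') h = G i) :
    ∃ G' : Set.Iic j ⥤ C, IsGood F τ G' ∧ ∀ i, restrictionLE G' (le_of_lt i.2) = G i := by
  let g := glue (OrderEmbedding.subtype (· ∈ Set.Iio j)) G hG
  obtain ⟨c⟩ := hcocone j g
  obtain ⟨b, hb, ⟨t⟩⟩ := hdom.1 c.pt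
  have hres : ∀ i : Set.Iio j, restrictionLE (ofCocone (c.extend t)) (le_of_lt i.2) = G i := by
    rintro ⟨i, hi⟩
    refine Arrow.functor_ext fun ⟨k₁, _⟩ ⟨k₂, hk₂⟩ f => ?_
    have hk₂j : k₂ < j := lt_of_le_of_lt hk₂ hi
    calc _ = Arrow.mk (g.map (homOfLE (leOfHom f) : (⟨k₁, _⟩ : Set.Iio j) ⟶ ⟨k₂, hk₂j⟩)) :=
          arrowMap_ofCocone (c.extend t) k₁ k₂ (leOfHom f) hk₂j
      _ = arrowMap (G ⟨k₂, hk₂j⟩) k₁ k₂ (leOfHom f) le_rfl := arrow_mk_glue_map _ _ _ _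
      _ = _ := by rw [← hG (show (⟨k₂, hk₂j⟩ : Set.Iio j) ≤ ⟨i, hi⟩ from hk₂)]; rfl
  refine ⟨ofCocone (c.extend t), isGood_of_lt (fun i hi => ?_)
    ⟨?_, fun γ hγ => (hj.succ_ne γ hγ).elim, fun γ hγ => (hj.succ_ne γ hγ).elim⟩, hres⟩
  · rw [hres ⟨i, hi⟩]
    exact hgood _ i le_rfl
  · rw [ofCocone_obj_eq_pt]
    exact ⟨b, hb, rfl⟩

lemma isGood_const [OrderBot J] (X : C) (hX : X ∈ dom F) :
    IsGood F τ ((Functor.const (Set.Iic (⊥ : J))).obj X) := by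
  have hsucc : ∀ γ i, Order.succ γ = i → ¬ i ≤ (⊥ : J) := fun γ i hγ hi =>
    not_lt_bot ((Order.lt_succ γ).trans_le (hγ.trans_le hi))
  exact fun i hi => ⟨hX, fun γ hγ => (hsucc γ i hγ hi).elim, fun γ hγ => (hsucc γ i hγ hi).elim⟩

lemma exists_isGood_family [OrderBot J] [WellFoundedLT J] [Nonempty C]
    (hcocone : ∀ (j : J) (G : Set.Iio j ⥤ C), Nonempty (Cocone G))
    (hamalg : AmalgProp C) (hjep : JointEmbProp C) (hdom : Dominating F) :
    ∃ G : ∀ j : J, Set.Iic j ⥤ C, (∀ j, IsGood F τ (G j)) ∧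
      ∀ ⦃i j⦄ (h : i ≤ j), restrictionLE (G j) h = G i := by
  obtain ⟨b, hb, -⟩ := hdom.1 (Classical.arbitrary C)
  let d : (goodFunctors F τ).WellOrderInductionData := .ofExists
    (fun j _ G => by
      obtain ⟨G', hG', hres⟩ := exists_isGood_succ hamalg hjep hdom G.2
      exact ⟨⟨G', hG'⟩, Subtype.ext hres⟩)
    (fun j hj x => by
      obtain ⟨G', hG', hres⟩ := exists_isGood_limit hcocone hdom hj (fun i => (x.val (op i)).1)
        (fun i => (x.val (op i)).2) fun i i' h => congrArg Subtype.val (x.property (homOfLE h).op)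
      exact ⟨⟨G', hG'⟩, fun i hi => Subtype.ext (hres ⟨i, hi⟩)⟩)
  let s := d.sectionsMk ⟨_, isGood_const b.left ⟨b, hb, rfl⟩⟩
  exact ⟨fun j => (s.val (op j)).1, fun j => (s.val (op j)).2,
    fun i j h => congrArg Subtype.val (s.property (homOfLE h).op)⟩

end Stages

lemma isFraisseSeq_of_absorbs {J : Type*} [Preorder J] [SuccOrder J] [Nonempty J]
    {F : Set (Arrow C)} (hdom : Dominating F) (τ : J → J × Arrow C)
    (hτ : ∀ α, ∀ a ∈ F, ∀ ξ, ∃ γ, ξ ≤ γ ∧ τ γ = (α, a)) (u : J ⥤ C)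
    (hmem : ∀ ξ, u.obj ξ ∈ dom F) (hemb : ∀ γ, Nonempty ((τ γ).2.left ⟶ u.obj (Order.succ γ)))
    (habs : ∀ γ (hα : (τ γ).1 ≤ γ),
      Absorbs (Arrow.mk (u.map (homOfLE (hα.trans (Order.le_succ γ))))) (τ γ).2) :
    IsFraisseSeq u := by
  refine ⟨fun x => ?_, fun ξ y f => ?_⟩
  · obtain ⟨a, ha, ⟨i⟩⟩ := hdom.1 x
    obtain ⟨γ, -, hγ⟩ := hτ (Classical.arbitrary J) a ha (Classical.arbitrary J)
    have hemb := hemb γ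
    rw [hγ] at hemb
    exact ⟨Order.succ γ, ⟨i ≫ hemb.some⟩⟩
  · obtain ⟨z, h, hfh⟩ := hdom.exists_comp_mem (hmem ξ) f
    obtain ⟨γ, hξγ, hγ⟩ := hτ ξ _ hfh ξ
    have habs := habs γ
    rw [hγ] at habs
    obtain ⟨g, hg⟩ := habs hξγ (f ≫ h) rfl
    exact ⟨Order.succ γ, hξγ.trans (Order.le_succ γ), h ≫ g, by simpa using hg⟩

theorem exists_isFraisseSeq {J : Type*} [LinearOrder J] [SuccOrder J] [OrderBot J]
    [WellFoundedLT J] [NoMaxOrder J] [Nonempty C]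
    (hcocone : ∀ (j : J) (G : Set.Iio j ⥤ C), Nonempty (Cocone G))
    (hamalg : AmalgProp C) (hjep : JointEmbProp C) {F : Set (Arrow C)} (hdom : Dominating F)
    (τ : J → J × Arrow C) (hτ : ∀ α, ∀ a ∈ F, ∀ ξ, ∃ γ, ξ ≤ γ ∧ τ γ = (α, a)) :
    ∃ u : J ⥤ C, IsFraisseSeq u := by
  obtain ⟨G, hgood, hG⟩ := exists_isGood_family (τ := τ) hcocone hamalg hjep hdom
  refine ⟨glue (OrderIso.refl J).toOrderEmbedding G hG, isFraisseSeq_of_absorbs hdom τ hτ _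
    (fun ξ => (hgood ξ ξ le_rfl).top_mem) (fun γ => (hgood _ _ le_rfl).embeds γ rfl)
    fun γ hα => ?_⟩
  convert (hgood _ _ le_rfl).absorbs γ rfl hα using 1
  exact arrow_mk_glue_map _ _ _ _

section Cardinal

variable {κ : Cardinal.{w}}

lemma mk_idx_ord (κ : Cardinal.{w}) : Cardinal.mk (Idx κ.ord) = Cardinal.lift.{w + 1} κ := by
  rw [show Cardinal.mk (Idx κ.ord) = Cardinal.mk (Set.Iio κ.ord) from rfl,
    Cardinal.mk_Iio_ordinal, Cardinal.card_ord]

lemma exists_cofinal_enumeration (hκ : Cardinal.aleph0 ≤ κ) {X : Type w} [Nonempty X]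
    (hX : Cardinal.mk X ≤ κ) :
    ∃ τ : Idx κ.ord → Idx κ.ord × X, ∀ α x ξ, ∃ γ, ξ ≤ γ ∧ τ γ = (α, x) := by
  obtain ⟨e⟩ : Nonempty ((Idx κ.ord × X) × Idx κ.ord ≃ Idx κ.ord) := by
    have hJ : Cardinal.aleph0 ≤ Cardinal.mk (Idx κ.ord) := by
      rw [mk_idx_ord]; exact Cardinal.aleph0_le_lift.2 hκ
    have hXJ : Cardinal.lift.{w + 1} (Cardinal.mk X) ≤ Cardinal.mk (Idx κ.ord) := by
      rw [mk_idx_ord]; exact Cardinal.lift_le.2 hX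
    refine Cardinal.eq.1 ?_
    rw [Cardinal.mk_prod, Cardinal.mk_prod, Cardinal.lift_id, Cardinal.lift_id,
      Cardinal.lift_id'.{w, w + 1}, Cardinal.mul_eq_left hJ hXJ (by simp),
      Cardinal.mul_eq_self hJ]
  refine ⟨fun γ => (e.symm γ).1, fun α x ξ => ?_⟩
  by_contra! h
  -- otherwise `δ ↦ e ((α, x), δ)` would inject `Idx κ.ord` into the initial segment below `ξ`
  have hlt : ∀ δ, e ((α, x), δ) < ξ := fun δ => lt_of_not_ge fun hle => h _ hle (by simp)
  have hinj := Cardinal.mk_le_of_injective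
    (f := fun δ => (⟨(e ((α, x), δ)).1, hlt δ⟩ : Set.Iio ξ.1)) fun δ δ' hδ => by
      have h : (e ((α, x), δ)).1 = (e ((α, x), δ')).1 := congrArg (fun p : Set.Iio ξ.1 => p.1) hδ
      simpa using e.injective (Subtype.ext h)
  rw [mk_idx_ord, Cardinal.mk_Iio_ordinal, Cardinal.lift_le] at hinj
  exact (Cardinal.lt_ord.1 ξ.2).not_ge hinj

lemma _root_.KappaBounded.nonempty_cocone (hbd : KappaBounded C κ) {lam : Ordinal.{w}}
    (hlam : lam < κ.ord) (G : Idx lam ⥤ C) : Nonempty (Cocone G) := by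
  obtain ⟨y, c, hc⟩ := hbd lam hlam G
  exact ⟨{ pt := y
           ι := { app := c
                  naturality := fun α β f =>
                    (hc α β (leOfHom f)).trans (Category.comp_id _).symm } }⟩

lemma _root_.KappaBounded.nonempty_cocone_Iio (hbd : KappaBounded C κ) (j : Idx κ.ord)
    (G : Set.Iio j ⥤ C) : Nonempty (Cocone G) := by
  let e : Idx j.1 ≃o Set.Iio j :=
    { toFun := fun ξ => ⟨⟨ξ.1, ξ.2.trans j.2⟩, ξ.2⟩
      invFun := fun ξ => ⟨ξ.1.1, ξ.2⟩
      left_inv := fun _ => rfl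
      right_inv := fun _ => rfl
      map_rel_iff' := Iff.rfl }
  obtain ⟨c⟩ := hbd.nonempty_cocone j.2 (e.equivalence.functor ⋙ G)
  exact ⟨(Cocone.whiskeringEquivalence e.equivalence).inverse.obj c⟩

lemma _root_.KappaBounded.nonempty (hbd : KappaBounded C κ) (hκ : κ ≠ 0) : Nonempty C := by
  have : IsEmpty (Idx 0) := ⟨fun ξ => not_lt_zero ξ.2⟩
  obtain ⟨c⟩ := hbd.nonempty_cocone (Cardinal.ord_pos.2 (pos_iff_ne_zero.2 hκ))
    (functorOfIsEmpty _ C)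
  exact ⟨c.pt⟩

end Cardinal

end Fraisse

/-- Existence: if `κ` is an infinite regular cardinal and `C` is a `κ`-bounded
category with the amalgamation and joint embedding properties which is dominated by a family
of at most `κ` arrows, then `C` has a Fraïssé sequence of length `κ`. -/
theorem exists_fraisseSeq {C : Type u} [Category.{v} C] (κ : Cardinal.{max u v})
    (hκ : κ.IsRegular) (hbd : KappaBounded C κ) (hamalg : AmalgProp C)
    (hjep : JointEmbProp C) (F : Set (Arrow C)) (hdom : Dominating F)
    (hcard : Cardinal.mk F ≤ κ) :
    ∃ u : Idx κ.ord ⥤ C, IsFraisseSeq u := by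
  have := hbd.nonempty hκ.pos.ne'
  obtain ⟨a, ha, -⟩ := hdom.1 (Classical.arbitrary C)
  have : Nonempty F := ⟨⟨a, ha⟩⟩
  obtain ⟨τ, hτ⟩ := Fraisse.exists_cofinal_enumeration hκ.aleph0_le hcard
  let _ : OrderBot (Idx κ.ord) :=
    { bot := ⟨0, Cardinal.ord_pos.2 hκ.pos⟩, bot_le := fun ξ => zero_le (a := ξ.1) }
  let _ : SuccOrder (Idx κ.ord) := .ofLinearWellFoundedLT _
  have : NoMaxOrder (Idx κ.ord) :=
    (Cardinal.isSuccLimit_ord hκ.aleph0_le).isSuccPrelimit.noMaxOrder_Iio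
  exact Fraisse.exists_isFraisseSeq hbd.nonempty_cocone_Iio hamalg hjep hdom
    (fun γ => ((τ γ).1, (τ γ).2.1)) fun α a ha ξ =>
      (hτ α ⟨a, ha⟩ ξ).imp fun γ h => ⟨h.1, by simp [h.2]⟩
end

section
/- (Countable Cofinality) Let K be a category with the amalgamation property and let u be a Fraïssé sequence of length κ in K. Then for every inductive sequence x of length ω in K there exist a nondecreasing map α : ω → κ and arrows f_n : x_n → u_{α(n)} such that u_{α(k)}^{α(ℓ)}∘f_k = f_ℓ∘x_k^ℓ for all k ≤ ℓ < ω (i.e., there is a morphism of sequences from x to u). -/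
open CategoryTheory

universe w v u

noncomputable def seqData {C : Type u} [Category.{v} C]
    (hC : AmalgProp C) (κ : Cardinal.{w}) (u : Idx κ.ord ⥤ C) (hu : IsFraisseSeq u)
    (x : ℕ ⥤ C) : ∀ n : ℕ, Σ' ξ : Idx κ.ord, (x.obj n ⟶ u.obj ξ)
  | 0 => ⟨(hu.1 (x.obj 0)).choose, (hu.1 (x.obj 0)).choose_spec.some⟩
  | n+1 =>
    let p := seqData hC κ u hu x n
    let hAm := hC (x.obj n) (x.obj (n+1)) (u.obj p.1) (x.map (homOfLE (Nat.le_succ n))) p.2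
    let hA := hu.2 p.1 hAm.choose hAm.choose_spec.choose_spec.choose
    ⟨hA.choose, hAm.choose_spec.choose ≫ hA.choose_spec.choose_spec.choose⟩

theorem seqData_step {C : Type u} [Category.{v} C]
    (hC : AmalgProp C) (κ : Cardinal.{w}) (u : Idx κ.ord ⥤ C) (hu : IsFraisseSeq u)
    (x : ℕ ⥤ C) (n : ℕ) :
    ∃ h : (seqData hC κ u hu x n).1 ≤ (seqData hC κ u hu x (n+1)).1,
      (seqData hC κ u hu x n).2 ≫ u.map (homOfLE h) =
        x.map (homOfLE (Nat.le_succ n)) ≫ (seqData hC κ u hu x (n+1)).2 := by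
  set p := seqData hC κ u hu x n with hp
  have hAm := hC (x.obj n) (x.obj (n+1)) (u.obj p.1) (x.map (homOfLE (Nat.le_succ n))) p.2
  have hA := hu.2 p.1 hAm.choose hAm.choose_spec.choose_spec.choose
  refine ⟨hA.choose_spec.choose, ?_⟩
  have e1 : hAm.choose_spec.choose_spec.choose ≫ hA.choose_spec.choose_spec.choose =
      u.map (homOfLE hA.choose_spec.choose) := hA.choose_spec.choose_spec.choose_spec
  have e2 : x.map (homOfLE (Nat.le_succ n)) ≫ hAm.choose_spec.choose =
      p.2 ≫ hAm.choose_spec.choose_spec.choose := hAm.choose_spec.choose_spec.choose_spec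
  show p.2 ≫ u.map (homOfLE hA.choose_spec.choose) =
      x.map (homOfLE (Nat.le_succ n)) ≫
        (hAm.choose_spec.choose ≫ hA.choose_spec.choose_spec.choose)
  calc p.2 ≫ u.map (homOfLE hA.choose_spec.choose)
      = p.2 ≫ (hAm.choose_spec.choose_spec.choose ≫ hA.choose_spec.choose_spec.choose) :=
        congrArg (fun t => p.2 ≫ t) e1.symm
    _ = (p.2 ≫ hAm.choose_spec.choose_spec.choose) ≫ hA.choose_spec.choose_spec.choose :=
        (Category.assoc _ _ _).symm
    _ = (x.map (homOfLE (Nat.le_succ n)) ≫ hAm.choose_spec.choose) ≫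
          hA.choose_spec.choose_spec.choose :=
        congrArg (fun t => t ≫ hA.choose_spec.choose_spec.choose) e2.symm
    _ = x.map (homOfLE (Nat.le_succ n)) ≫
          (hAm.choose_spec.choose ≫ hA.choose_spec.choose_spec.choose) :=
        Category.assoc _ _ _

/-- Countable Cofinality: if `C` has the amalgamation property and `u` is a
Fraïssé sequence of length `κ` in `C`, then every inductive sequence of length `ω` in `C`
admits a morphism of sequences into `u`. -/
theorem exists_seqHom_of_omega_seq {C : Type u} [Category.{v} C]
    (hC : AmalgProp C) (κ : Cardinal.{w}) (u : Idx κ.ord ⥤ C) (hu : IsFraisseSeq u)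
    (x : ℕ ⥤ C) :
    ∃ (α : ℕ → Idx κ.ord) (hα : Monotone α) (f : ∀ n : ℕ, x.obj n ⟶ u.obj (α n)),
      ∀ (k l : ℕ) (h : k ≤ l),
        f k ≫ u.map (homOfLE (hα h)) = x.map (homOfLE h) ≫ f l := by
  set S := seqData hC κ u hu x with hS
  have step := seqData_step hC κ u hu x
  have hα : Monotone fun n => (S n).1 :=
    monotone_nat_of_le_succ fun n => (step n).choose
  refine ⟨fun n => (S n).1, hα, fun n => (S n).2, fun k l h => ?_⟩
  induction l, h using Nat.le_induction with
  | base =>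
    have : homOfLE (hα (le_refl k)) = 𝟙 ((S k).1) := rfl
    rw [this, u.map_id, Category.comp_id]
    have : homOfLE (le_refl k) = 𝟙 k := rfl
    rw [this, x.map_id, Category.id_comp]
  | succ l hkl ih =>
    have h1 : homOfLE (hα (Nat.le_succ_of_le hkl)) =
        homOfLE (hα hkl) ≫ homOfLE (hα (Nat.le_succ l)) := rfl
    have h2 : (homOfLE (Nat.le_succ_of_le hkl) : (k:ℕ) ⟶ l+1) =
        homOfLE hkl ≫ homOfLE (Nat.le_succ l) := rfl
    rw [h1, u.map_comp, ← Category.assoc, ih, Category.assoc, h2, x.map_comp,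
      Category.assoc]
    congr 1
    have hst := (step l).choose_spec
    have : homOfLE (hα (Nat.le_succ l)) = homOfLE (step l).choose := rfl
    rw [this, hst]
end

section
/- Let K be a category with the amalgamation property and let u be a Fraïssé sequence of regular length κ in K. Then for every continuous inductive sequence x of length ≤ κ in K there exist a nondecreasing map α from the length of x into κ and arrows f_ξ : x_ξ → u_{α(ξ)} such that u_{α(ξ)}^{α(η)}∘f_ξ = f_η∘x_ξ^η for all ξ ≤ η below the length of x (i.e., there is a morphism of sequences from x to u). -/
open CategoryTheory

universe w v u

/-- A sequence of length `μ` is continuous if at every limit ordinal `δ < μ` the object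
`x_δ`, together with the arrows `x_ξ^δ` (`ξ < δ`), is a colimit of the restriction of the
sequence to `δ`. -/
def IsContinuousSeq {C : Type u} [Category.{v} C] {μ : Ordinal.{w}} (x : Idx μ ⥤ C) : Prop :=
  ∀ δ : Idx μ, Order.IsSuccLimit δ.1 →
    ∀ (y : C) (g : ∀ ξ : Idx μ, ξ < δ → (x.obj ξ ⟶ y)),
      (∀ (ξ η : Idx μ) (hξ : ξ < δ) (hη : η < δ) (h : ξ ≤ η),
        x.map (homOfLE h) ≫ g η hη = g ξ hξ) →
      ∃! h : x.obj δ ⟶ y, ∀ (ξ : Idx μ) (hξ : ξ < δ),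
        x.map (homOfLE hξ.le) ≫ h = g ξ hξ

/-!
Zorn's lemma on partial morphisms of sequences, defined on initial segments of `μ` and ordered
by extension: a maximal one is total, since it can always be extended by one more step. At the
next index `δ < μ` an arrow out of `x_δ` is found by (U) if `δ = 0`; by amalgamating
`x_e ⟶ x_{e+1}` with `x_e ⟶ u_{α e}` and absorbing the amalgam into `u` with (A) if `δ = e + 1`;
and, if `δ` is a limit, by continuity of `x` at `δ`, once regularity of `κ` has bounded the
indices `α ζ` (`ζ < δ`) below `κ`.
-/

open Set

theorem Cardinal.IsRegular.exists_upper_bound {κ : Cardinal.{w}} (hκ : κ.IsRegular)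
    {δ : Ordinal.{w}} (hδ : δ < κ.ord) (f : Iio δ → Ordinal.{w}) (hf : ∀ i, f i < κ.ord) :
    ∃ s < κ.ord, ∀ i, f i ≤ s := by
  refine ⟨⨆ i, f i, Ordinal.lift_iSup_lt_of_lt_cof ?_ hf, le_ciSup Ordinal.bddAbove_of_small⟩
  rw [Cardinal.mk_Iio_ordinal, ← Ordinal.lift_cof, hκ.cof_ord, Cardinal.lift_id'.{w, w + 1}]
  exact Cardinal.lift_lt.2 (Cardinal.lt_ord.1 hδ)

theorem CategoryTheory.Functor.map_homOfLE_comp_s6 {C : Type u} [Category.{v} C] {I : Type*}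
    [Preorder I] (F : I ⥤ C) {a b c : I} (h₁ : a ≤ b) (h₂ : b ≤ c) :
    F.map (homOfLE h₁) ≫ F.map (homOfLE h₂) = F.map (homOfLE (h₁.trans h₂)) := by
  rw [← F.map_comp, homOfLE_comp]

theorem IsFraisseSeq.exists_comp_eq_comp {C : Type u} [Category.{v} C] {I : Type*} [Preorder I]
    {F : I ⥤ C} (hC : AmalgProp C) (hF : IsFraisseSeq F) {X Y : C} (i : X ⟶ Y) {a : I}
    (g : X ⟶ F.obj a) :
    ∃ (b : I) (hab : a ≤ b) (f : Y ⟶ F.obj b), g ≫ F.map (homOfLE hab) = i ≫ f := by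
  obtain ⟨d, f', g', hsq⟩ := hC X Y (F.obj a) i g
  obtain ⟨b, hab, g₂, hg₂⟩ := hF.2 a d g'
  exact ⟨b, hab, f' ≫ g₂, by rw [← hg₂, ← Category.assoc, ← hsq, Category.assoc]⟩

section SeqHom

variable {C : Type u} [Category.{v} C] {κ : Cardinal.{w}} {μ : Ordinal.{w}}

def BondingSquare (u : Idx κ.ord ⥤ C) (x : Idx μ ⥤ C) {ζ η : Idx μ} (h : ζ ≤ η)
    (s : Σ a : Idx κ.ord, x.obj ζ ⟶ u.obj a) (t : Σ b : Idx κ.ord, x.obj η ⟶ u.obj b) : Prop :=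
  ∃ hab : s.1 ≤ t.1, s.2 ≫ u.map (homOfLE hab) = x.map (homOfLE h) ≫ t.2

theorem BondingSquare.trans {u : Idx κ.ord ⥤ C} {x : Idx μ ⥤ C} {ζ η θ : Idx μ}
    {h₁ : ζ ≤ η} {h₂ : η ≤ θ} {s : Σ a : Idx κ.ord, x.obj ζ ⟶ u.obj a}
    {t : Σ a : Idx κ.ord, x.obj η ⟶ u.obj a} {r : Σ a : Idx κ.ord, x.obj θ ⟶ u.obj a}
    (hst : BondingSquare u x h₁ s t) (htr : BondingSquare u x h₂ t r) :
    BondingSquare u x (h₁.trans h₂) s r := by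
  obtain ⟨hab, est⟩ := hst
  obtain ⟨hbc, etr⟩ := htr
  refine ⟨hab.trans hbc, ?_⟩
  rw [← u.map_homOfLE_comp_s6 hab hbc, ← Category.assoc, est, Category.assoc, etr,
    ← Category.assoc, x.map_homOfLE_comp_s6]

/-- A morphism of sequences into `u` from the restriction of `x` to the ordinals below `dom`.
The index `α ζ` and the arrow `x_ζ ⟶ u_{α ζ}` are packed into one dependent pair, so that two
partial morphisms agree at `ζ` when a single equation holds. -/
structure PartialSeqHom (u : Idx κ.ord ⥤ C) (x : Idx μ ⥤ C) where
  dom : Ordinal.{w}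
  dom_le : dom ≤ μ
  app : ∀ ζ : Idx μ, ζ.1 < dom → Σ a : Idx κ.ord, x.obj ζ ⟶ u.obj a
  comm : ∀ (ζ η : Idx μ) (hζ : ζ.1 < dom) (hη : η.1 < dom) (h : ζ ≤ η),
    BondingSquare u x h (app ζ hζ) (app η hη)

namespace PartialSeqHom

variable {u : Idx κ.ord ⥤ C} {x : Idx μ ⥤ C}

instance : Preorder (PartialSeqHom u x) where
  le p q := p.dom ≤ q.dom ∧ ∀ (ζ : Idx μ) (hp : ζ.1 < p.dom) (hq : ζ.1 < q.dom),
    q.app ζ hq = p.app ζ hp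
  le_refl _ := ⟨le_rfl, fun _ _ _ => rfl⟩
  le_trans _ _ _ h₁ h₂ :=
    ⟨h₁.1.trans h₂.1, fun ζ hp hr => (h₂.2 ζ (hp.trans_le h₁.1) hr).trans (h₁.2 ζ hp _)⟩

theorem app_eq_of_le {p q : PartialSeqHom u x} (h : p ≤ q) (ζ : Idx μ) (hp : ζ.1 < p.dom) :
    q.app ζ (hp.trans_le h.1) = p.app ζ hp :=
  h.2 ζ hp _

theorem bddAbove_of_isChain {c : Set (PartialSeqHom u x)} (hc : IsChain (· ≤ ·) c) :
    BddAbove c := by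
  have hbdd : BddAbove (dom '' c) := ⟨μ, by rintro _ ⟨p, -, rfl⟩; exact p.dom_le⟩
  have hex : ∀ ζ : Idx μ, ζ.1 < sSup (dom '' c) → ∃ p ∈ c, ζ.1 < p.dom := fun ζ hζ => by
    obtain ⟨_, ⟨p, hp, rfl⟩, hlt⟩ := (lt_csSup_iff' hbdd).1 hζ
    exact ⟨p, hp, hlt⟩
  choose P hPc hPdom using hex
  refine ⟨⟨sSup (dom '' c), csSup_le' fun _ ⟨p, _, hp⟩ => hp ▸ p.dom_le,
    fun ζ hζ => (P ζ hζ).app ζ (hPdom ζ hζ), fun ζ η hζ hη h => ?_⟩,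
    fun p hp => ⟨le_csSup hbdd ⟨p, hp, rfl⟩, fun ζ hpζ hζ => ?_⟩⟩
  · obtain ⟨r, -, hζr, hηr⟩ := hc.directedOn _ (hPc ζ hζ) _ (hPc η hη)
    rw [← app_eq_of_le hζr, ← app_eq_of_le hηr]
    exact r.comm ζ η _ _ h
  · obtain ⟨r, -, hζr, hpr⟩ := hc.directedOn _ (hPc ζ hζ) _ hp
    exact (app_eq_of_le hζr ζ _).symm.trans (app_eq_of_le hpr ζ hpζ)

theorem exists_app_le (hκ : κ.IsRegular) (p : PartialSeqHom u x) (hd : p.dom < κ.ord) :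
    ∃ s : Idx κ.ord, ∀ (ζ : Idx μ) (hζ : ζ.1 < p.dom), (p.app ζ hζ).1 ≤ s := by
  obtain ⟨s, hs, hle⟩ := hκ.exists_upper_bound hd
    (fun o => (p.app ⟨o.1, o.2.trans_le p.dom_le⟩ o.2).1.1) (fun o => (p.app _ _).1.2)
  exact ⟨⟨s, hs⟩, fun ζ hζ => hle ⟨ζ.1, hζ⟩⟩

/-- `f : x_δ ⟶ u_a`, where `δ = p.dom`, extends `p` to the initial segment `δ + 1`. -/
def IsCompatible (p : PartialSeqHom u x) (hd : p.dom < μ) {a : Idx κ.ord}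
    (f : x.obj ⟨p.dom, hd⟩ ⟶ u.obj a) : Prop :=
  ∀ (ζ : Idx μ) (hζ : ζ.1 < p.dom),
    BondingSquare u x (show ζ ≤ ⟨p.dom, hd⟩ from hζ.le) (p.app ζ hζ) ⟨a, f⟩

theorem exists_isCompatible_of_dom_eq_zero (hu : IsFraisseSeq u) (p : PartialSeqHom u x)
    (hd : p.dom < μ) (h0 : p.dom = 0) :
    ∃ (a : Idx κ.ord) (f : x.obj ⟨p.dom, hd⟩ ⟶ u.obj a), p.IsCompatible hd f := by
  obtain ⟨a, ⟨f⟩⟩ := hu.1 (x.obj ⟨p.dom, hd⟩)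
  exact ⟨a, f, fun ζ hζ => by simp [h0] at hζ⟩

theorem exists_isCompatible_of_dom_eq_succ (hC : AmalgProp C) (hu : IsFraisseSeq u)
    (p : PartialSeqHom u x) (hd : p.dom < μ) {e : Ordinal.{w}} (he : Order.succ e = p.dom) :
    ∃ (a : Idx κ.ord) (f : x.obj ⟨p.dom, hd⟩ ⟶ u.obj a), p.IsCompatible hd f := by
  have heP : e < p.dom := he ▸ Order.lt_succ e
  let eI : Idx μ := ⟨e, heP.trans hd⟩
  have hed : eI ≤ ⟨p.dom, hd⟩ := heP.le
  obtain ⟨b, hab, f, hf⟩ := hu.exists_comp_eq_comp hC (x.map (homOfLE hed)) (p.app eI heP).2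
  refine ⟨b, f, fun ζ hζ => ?_⟩
  have hζe : ζ ≤ eI := show ζ.1 ≤ e from Order.lt_succ_iff.1 (he ▸ hζ)
  exact (p.comm ζ eI hζ heP hζe).trans (show BondingSquare u x hed _ ⟨b, f⟩ from ⟨hab, hf⟩)

theorem exists_isCompatible_of_isSuccLimit (hκ : κ.IsRegular) (hμ : μ ≤ κ.ord)
    (hx : IsContinuousSeq x) (p : PartialSeqHom u x) (hd : p.dom < μ)
    (hlim : Order.IsSuccLimit p.dom) :
    ∃ (a : Idx κ.ord) (f : x.obj ⟨p.dom, hd⟩ ⟶ u.obj a), p.IsCompatible hd f := by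
  obtain ⟨s, hs⟩ := p.exists_app_le hκ (hd.trans_le hμ)
  obtain ⟨f, hf, -⟩ := hx ⟨p.dom, hd⟩ hlim (u.obj s)
    (fun ζ hζ => (p.app ζ hζ).2 ≫ u.map (homOfLE (hs ζ hζ))) fun ζ η hζ hη h => by
      obtain ⟨hab, e⟩ := p.comm ζ η hζ hη h
      rw [← Category.assoc, ← e, Category.assoc, u.map_homOfLE_comp_s6]
  exact ⟨s, f, fun ζ hζ => ⟨hs ζ hζ, (hf ζ hζ).symm⟩⟩

theorem exists_isCompatible (hC : AmalgProp C) (hκ : κ.IsRegular) (hu : IsFraisseSeq u)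
    (hμ : μ ≤ κ.ord) (hx : IsContinuousSeq x) (p : PartialSeqHom u x) (hd : p.dom < μ) :
    ∃ (a : Idx κ.ord) (f : x.obj ⟨p.dom, hd⟩ ⟶ u.obj a), p.IsCompatible hd f := by
  rcases Ordinal.zero_or_succ_or_isSuccLimit p.dom with h0 | ⟨e, he⟩ | hlim
  · exact p.exists_isCompatible_of_dom_eq_zero hu hd h0
  · exact p.exists_isCompatible_of_dom_eq_succ hC hu hd he
  · exact p.exists_isCompatible_of_isSuccLimit hκ hμ hx hd hlim

noncomputable def extend (p : PartialSeqHom u x) (hd : p.dom < μ) {a : Idx κ.ord}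
    (f : x.obj ⟨p.dom, hd⟩ ⟶ u.obj a) (hf : p.IsCompatible hd f) : PartialSeqHom u x where
  dom := Order.succ p.dom
  dom_le := Order.succ_le_of_lt hd
  app ζ hζ := if h : ζ.1 < p.dom then p.app ζ h else
    ⟨a, x.map (homOfLE (show ζ ≤ ⟨p.dom, hd⟩ from (Order.lt_succ_iff.1 hζ : ζ.1 ≤ p.dom))) ≫ f⟩
  comm ζ η hζ hη h := by
    split_ifs with hζ' hη' hη'
    · exact p.comm ζ η hζ' hη' h
    · obtain ⟨hab, e⟩ := hf ζ hζ'
      exact ⟨hab, by rw [e, ← Category.assoc, x.map_homOfLE_comp_s6]⟩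
    · exact (hζ' ((show ζ.1 ≤ η.1 from h).trans_lt hη')).elim
    · refine ⟨le_rfl, ?_⟩
      rw [show homOfLE (le_refl a) = 𝟙 a from rfl, u.map_id, Category.comp_id,
        ← Category.assoc, x.map_homOfLE_comp_s6]

theorem le_extend (p : PartialSeqHom u x) (hd : p.dom < μ) {a : Idx κ.ord}
    (f : x.obj ⟨p.dom, hd⟩ ⟶ u.obj a) (hf : p.IsCompatible hd f) : p ≤ p.extend hd f hf :=
  ⟨(Order.lt_succ p.dom).le, fun _ hp _ => dif_pos hp⟩

theorem exists_dom_eq (hC : AmalgProp C) (hκ : κ.IsRegular) (hu : IsFraisseSeq u)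
    (hμ : μ ≤ κ.ord) (hx : IsContinuousSeq x) : ∃ m : PartialSeqHom u x, m.dom = μ := by
  obtain ⟨m, hm⟩ := zorn_le (α := PartialSeqHom u x) fun _ => bddAbove_of_isChain
  refine ⟨m, m.dom_le.eq_of_not_lt fun hd => ?_⟩
  obtain ⟨a, f, hf⟩ := m.exists_isCompatible hC hκ hu hμ hx hd
  exact (Order.lt_succ m.dom).not_ge (hm (m.le_extend hd f hf)).1

end PartialSeqHom

end SeqHom

/-- if `C` has the amalgamation property and `u` is a Fraïssé sequence of
regular length `κ` in `C`, then every continuous sequence of length `≤ κ` admits a morphism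
of sequences into `u`. -/
theorem exists_seqHom_of_continuous_seq {C : Type u} [Category.{v} C]
    (hC : AmalgProp C) (κ : Cardinal.{w}) (hκ : κ.IsRegular)
    (u : Idx κ.ord ⥤ C) (hu : IsFraisseSeq u)
    (μ : Ordinal.{w}) (hμ : μ ≤ κ.ord) (x : Idx μ ⥤ C) (hx : IsContinuousSeq x) :
    ∃ (α : Idx μ → Idx κ.ord) (hα : Monotone α)
      (f : ∀ ξ : Idx μ, x.obj ξ ⟶ u.obj (α ξ)),
      ∀ (ξ η : Idx μ) (h : ξ ≤ η),
        f ξ ≫ u.map (homOfLE (hα h)) = x.map (homOfLE h) ≫ f η := by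
  obtain ⟨m, hm⟩ := PartialSeqHom.exists_dom_eq hC hκ hu hμ hx
  have hlt : ∀ ζ : Idx μ, ζ.1 < m.dom := fun ζ => ζ.2.trans_le hm.ge
  exact ⟨fun ζ => (m.app ζ (hlt ζ)).1, fun ζ η h => (m.comm ζ η _ _ h).1,
    fun ζ => (m.app ζ (hlt ζ)).2, fun ζ η h => (m.comm ζ η _ _ h).2⟩
end

section
/- (Uniqueness / back-and-forth for countable Fraïssé sequences) Let u and v be Fraïssé sequences of length ω in a category K, let k, ℓ < ω, and let f : u_k → v_ℓ be an arrow of K. Then there exist natural numbers k = k_0 ≤ ℓ_0 < k_1 ≤ ℓ_1 < k_2 ≤ ℓ_2 < … with ℓ_0 ≥ ℓ, and arrows f_n : u_{k_n} → v_{ℓ_n} and g_n : v_{ℓ_n} → u_{k_{n+1}} such that f_0 = v_ℓ^{ℓ_0}∘f, and for every n: g_n∘f_n = u_{k_n}^{k_{n+1}} and f_{n+1}∘g_n = v_{ℓ_n}^{ℓ_{n+1}}. Consequently the families (f_n) and (g_n) induce mutually inverse morphisms between the sequences u and v, so u and v are isomorphic as sequences. (No amalgamation hypothesis on K is needed.)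 -/
open CategoryTheory

universe v u

/-- Auxiliary state for the back-and-forth construction. -/
structure BFState {C : Type u} [Category.{v} C] (u v : ℕ ⥤ C) where
  k : ℕ
  l : ℕ
  hkl : k ≤ l
  f : u.obj k ⟶ v.obj l

lemma BF_step {C : Type u} [Category.{v} C] {u v : ℕ ⥤ C}
    (hu : IsFraisseSeq u) (hv : IsFraisseSeq v) (s : BFState u v) :
    ∃ (t : BFState u v) (hlt : s.l < t.k) (g : v.obj s.l ⟶ u.obj t.k),
      s.f ≫ g = u.map (homOfLE (s.hkl.trans hlt.le)) ∧
      g ≫ t.f = v.map (homOfLE (hlt.le.trans t.hkl)) := by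
  obtain ⟨η, hη, g, hg⟩ := hu.2 s.k _ s.f
  set k' := max η (s.l + 1) with hk'
  have hlt : s.l < k' := lt_of_lt_of_le (Nat.lt_succ_self _) (le_max_right _ _)
  set g' : v.obj s.l ⟶ u.obj k' := g ≫ u.map (homOfLE (le_max_left _ _)) with hg'
  have hg'' : s.f ≫ g' = u.map (homOfLE (s.hkl.trans hlt.le)) := by
    rw [hg', ← Category.assoc, hg, ← Functor.map_comp]
    rfl
  obtain ⟨η₂, hη₂, h, hh⟩ := hv.2 s.l _ g'
  set l' := max η₂ k' with hl'
  have hkl' : k' ≤ l' := le_max_right _ _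
  refine ⟨⟨k', l', hkl', h ≫ v.map (homOfLE (le_max_left _ _))⟩, hlt, g', hg'', ?_⟩
  rw [← Category.assoc, hh, ← Functor.map_comp]
  rfl

/-- Uniqueness / back-and-forth: given Fraïssé sequences `u`, `v` of length `ω`
and an arrow `f : u_k ⟶ v_ℓ`, there are interleaved indices `k = k₀ ≤ ℓ₀ < k₁ ≤ ℓ₁ < ⋯` with
`ℓ ≤ ℓ₀` and arrows `fₙ : u_{kₙ} ⟶ v_{ℓₙ}`, `gₙ : v_{ℓₙ} ⟶ u_{kₙ₊₁}` such that
`f₀ = v_ℓ^{ℓ₀} ∘ f`, `gₙ ∘ fₙ = u_{kₙ}^{kₙ₊₁}` and `fₙ₊₁ ∘ gₙ = v_{ℓₙ}^{ℓₙ₊₁}` for all `n`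
(so the `fₙ` and `gₙ` induce mutually inverse morphisms of sequences). -/
theorem omega_fraisseSeq_back_and_forth {C : Type u} [Category.{v} C]
    (u v : ℕ ⥤ C) (hu : IsFraisseSeq u) (hv : IsFraisseSeq v)
    (k l : ℕ) (f : u.obj k ⟶ v.obj l) :
    ∃ (kk ll : ℕ → ℕ) (hk0 : kk 0 = k) (hl0 : l ≤ ll 0)
      (hkl : ∀ n, kk n ≤ ll n) (hlk : ∀ n, ll n < kk (n + 1))
      (ff : ∀ n, u.obj (kk n) ⟶ v.obj (ll n))
      (gg : ∀ n, v.obj (ll n) ⟶ u.obj (kk (n + 1))),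
      ff 0 = eqToHom (congrArg u.obj hk0) ≫ f ≫ v.map (homOfLE hl0) ∧
      (∀ n, ff n ≫ gg n = u.map (homOfLE ((hkl n).trans (hlk n).le))) ∧
      (∀ n, gg n ≫ ff (n + 1) = v.map (homOfLE ((hlk n).le.trans (hkl (n + 1))))) := by
  choose t hlt g h1 h2 using fun s => BF_step hu hv s
  let s0 : BFState u v := ⟨k, max l k, le_max_right _ _, f ≫ v.map (homOfLE (le_max_left _ _))⟩
  let seq : ℕ → BFState u v := fun n => Nat.rec s0 (fun _ s => t s) n
  refine ⟨fun n => (seq n).k, fun n => (seq n).l, rfl, le_max_left _ _,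
    fun n => (seq n).hkl, fun n => hlt (seq n), fun n => (seq n).f, fun n => g (seq n),
    by simp [seq, s0], fun n => h1 (seq n), fun n => h2 (seq n)⟩
end

section
/- Let K be a category and let f : Z → X and g : Z → Y be arrows of ↻K with the same domain. If the arrows e(f) : Z → X and e(g) : Z → Y admit a pushout in K, then f and g can be properly amalgamated in ↻K: there exist an object W and ↻K-arrows h : X → W, k : Y → W with h∘f = k∘g in ↻K and with e(g)∘r(f) = r(k)∘e(h) and e(f)∘r(g) = r(h)∘e(k) in K. -/
open CategoryTheory

universe v u

variable {C : Type u} [Category.{v} C]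

/-- An arrow of the category `↻K`: a pair `(e, r)` of arrows of `K` with `r ∘ e = id`. -/
@[ext]
structure RPHom (X Y : C) : Type v where
  e : X ⟶ Y
  r : Y ⟶ X
  retract : e ≫ r = 𝟙 X

/-- The category `↻K`: same objects as `K`, arrows are retractive pairs, composed by
`(e g ∘ e f, r f ∘ r g)`. -/
def RP (C : Type u) [Category.{v} C] : Type u := C

instance : Category.{v} (RP C) where
  Hom X Y := RPHom (C := C) X Y
  id X := ⟨𝟙 (show C from X), 𝟙 (show C from X), Category.comp_id (obj := C) _⟩
  comp {X Y Z} f g := ⟨RPHom.e f ≫ RPHom.e g, RPHom.r g ≫ RPHom.r f, by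
    exact (Category.assoc (obj := C) _ _ _).trans
      ((congrArg (RPHom.e f ≫ ·) ((Category.assoc (obj := C) _ _ _).symm.trans
        ((congrArg (· ≫ RPHom.r f) (RPHom.retract g)).trans (Category.id_comp (obj := C) _)))).trans
        (RPHom.retract f))⟩
  id_comp f := by
    apply RPHom.ext
    · exact Category.id_comp (obj := C) _
    · exact Category.comp_id (obj := C) _
  comp_id f := by
    apply RPHom.ext
    · exact Category.comp_id (obj := C) _
    · exact Category.id_comp (obj := C) _
  assoc f g h := by
    apply RPHom.ext
    · exact Category.assoc (obj := C) _ _ _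
    · exact (Category.assoc (obj := C) _ _ _).symm

/-! Amalgamate along the pushout `W` of `e f` and `e g` in `K`: a pushout of a split mono is split,
so the coprojections `X → W ← Y` are retracted by the copairings `[𝟙, e f ∘ r g]` and
`[e g ∘ r f, 𝟙]`. The two extra equations of a proper amalgamation are then just the defining
equations of these copairings. -/

namespace RPHom

open Limits

variable {Z X Y : C}

@[simps r]
noncomputable def pushoutInl (f : Z ⟶ X) (g : RPHom Z Y) [HasPushout f g.e] :
    RPHom X (pushout f g.e) where
  e := pushout.inl f g.e
  r := pushout.desc (𝟙 X) (g.r ≫ f) (by rw [← Category.assoc, g.retract]; simp)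
  retract := pushout.inl_desc _ _ _

@[simps r]
noncomputable def pushoutInr (f : RPHom Z X) (g : Z ⟶ Y) [HasPushout f.e g] :
    RPHom Y (pushout f.e g) where
  e := pushout.inr f.e g
  r := pushout.desc (f.r ≫ g) (𝟙 Y) (by rw [← Category.assoc, f.retract]; simp)
  retract := pushout.inr_desc _ _ _

theorem pushoutInl_r_comp_r (f : RPHom Z X) (g : RPHom Z Y) [HasPushout f.e g.e] :
    (pushoutInl f.e g).r ≫ f.r = (pushoutInr f g.e).r ≫ g.r := by
  apply pushout.hom_ext <;>
    simp only [pushoutInl_r, pushoutInr_r, pushout.inl_desc_assoc, pushout.inr_desc_assoc,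
      Category.id_comp, Category.assoc, f.retract, g.retract, Category.comp_id]

end RPHom

/-- if the `e`-components of two `↻K`-arrows `f : Z → X`, `g : Z → Y` admit a
pushout in `K`, then `f` and `g` can be properly amalgamated in `↻K`: there are `↻K`-arrows
`h : X → W`, `k : Y → W` with `h ∘ f = k ∘ g` in `↻K` (i.e. `e h ∘ e f = e k ∘ e g` and
`r f ∘ r h = r g ∘ r k`), and moreover `e g ∘ r f = r k ∘ e h` and `e f ∘ r g = r h ∘ e k`
in `K`. -/
theorem rp_proper_amalgamation_of_hasPushout (Z X Y : C)
    (f : RPHom Z X) (g : RPHom Z Y) [Limits.HasPushout f.e g.e] :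
    ∃ (W : C) (h : RPHom X W) (k : RPHom Y W),
      f.e ≫ h.e = g.e ≫ k.e ∧ h.r ≫ f.r = k.r ≫ g.r ∧
      f.r ≫ g.e = h.e ≫ k.r ∧ g.r ≫ f.e = k.e ≫ h.r :=
  ⟨_, RPHom.pushoutInl f.e g, RPHom.pushoutInr f g.e, Limits.pushout.condition,
    RPHom.pushoutInl_r_comp_r f g, (Limits.pushout.inl_desc _ _ _).symm,
    (Limits.pushout.inr_desc _ _ _).symm⟩
end

section
/- The category of separable Banach spaces with linear isometric embeddings as arrows has the amalgamation property: for all separable real Banach spaces Z, X, Y and all linear isometric embeddings f : Z → X and g : Z → Y, there exist a separable Banach space W and linear isometric embeddings f' : X → W and g' : Y → W with f'∘f = g'∘g. -/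
/-!
The amalgam is the pushout in normed spaces: the ℓ¹-sum `X ⊕₁ Y` modulo the closure of
`{(f z, -g z)}`. The quotient norm of `(a, b)` is `inf_z (‖a - f z‖ + ‖b + g z‖)`, which is at
least `|‖a‖ - ‖b‖|` because `‖f z‖ = ‖g z‖`; hence `X` and `Y` embed isometrically, and the
relation `(f z, 0) ~ (0, g z)` makes the square commute. Completeness and separability pass to
ℓ¹-sums and to quotients.
-/

open TopologicalSpace Metric

namespace LinearIsometry

variable {𝕜 Z X Y : Type*} [NormedField 𝕜]
  [SeminormedAddCommGroup Z] [NormedSpace 𝕜 Z]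
  [SeminormedAddCommGroup X] [NormedSpace 𝕜 X]
  [SeminormedAddCommGroup Y] [NormedSpace 𝕜 Y]
  (f : Z →ₗᵢ[𝕜] X) (g : Z →ₗᵢ[𝕜] Y)

def pushoutSubmodule : Submodule 𝕜 (WithLp 1 (X × Y)) :=
  (LinearMap.range ((WithLp.linearEquiv 1 𝕜 (X × Y)).symm.toLinearMap ∘ₗ
    f.toLinearMap.prod (-g.toLinearMap))).topologicalClosure

instance : IsClosed (pushoutSubmodule f g : Set (WithLp 1 (X × Y))) :=
  Submodule.isClosed_topologicalClosure _

abbrev Pushout : Type _ := WithLp 1 (X × Y) ⧸ pushoutSubmodule f g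

lemma toLp_mem_pushoutSubmodule (z : Z) :
    WithLp.toLp 1 (f z, -g z) ∈ pushoutSubmodule f g :=
  Submodule.le_topologicalClosure _ ⟨z, rfl⟩

namespace Pushout

lemma abs_norm_sub_norm_le_dist (a : X) (b : Y) (z : Z) :
    |‖a‖ - ‖b‖| ≤ dist (WithLp.toLp 1 (a, b)) (WithLp.toLp 1 (f z, -g z)) := by
  rw [dist_eq_norm, ← WithLp.toLp_sub, WithLp.prod_norm_eq_of_L1]
  calc |‖a‖ - ‖b‖| ≤ |‖a‖ - ‖z‖| + |‖z‖ - ‖b‖| := abs_sub_le _ _ _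
    _ ≤ ‖a - f z‖ + ‖b - -g z‖ := by
      gcongr
      · simpa using abs_norm_sub_norm_le a (f z)
      · simpa [abs_sub_comm] using abs_norm_sub_norm_le b (-g z)

lemma abs_norm_sub_norm_le_norm_mk (a : X) (b : Y) :
    |‖a‖ - ‖b‖| ≤ ‖(Submodule.Quotient.mk (WithLp.toLp 1 (a, b)) : Pushout f g)‖ := by
  have hnorm : ‖(Submodule.Quotient.mk (WithLp.toLp 1 (a, b)) : Pushout f g)‖ =
      infDist (WithLp.toLp 1 (a, b)) (pushoutSubmodule f g) :=
    QuotientAddGroup.norm_mk _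
  rw [hnorm, pushoutSubmodule, Submodule.topologicalClosure_coe, infDist_closure,
    le_infDist ⟨0, zero_mem _⟩]
  rintro _ ⟨z, rfl⟩
  exact abs_norm_sub_norm_le_dist f g a b z

noncomputable def inl : X →ₗᵢ[𝕜] Pushout f g where
  toLinearMap := (pushoutSubmodule f g).mkQ ∘ₗ
    (WithLp.linearEquiv 1 𝕜 (X × Y)).symm.toLinearMap ∘ₗ LinearMap.inl 𝕜 X Y
  norm_map' x := le_antisymm
    ((Submodule.Quotient.norm_mk_le _ _).trans_eq (WithLp.norm_toLp_fst ..))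
    (by simpa using abs_norm_sub_norm_le_norm_mk f g x 0)

noncomputable def inr : Y →ₗᵢ[𝕜] Pushout f g where
  toLinearMap := (pushoutSubmodule f g).mkQ ∘ₗ
    (WithLp.linearEquiv 1 𝕜 (X × Y)).symm.toLinearMap ∘ₗ LinearMap.inr 𝕜 X Y
  norm_map' y := le_antisymm
    ((Submodule.Quotient.norm_mk_le _ _).trans_eq (WithLp.norm_toLp_snd ..))
    (by simpa using abs_norm_sub_norm_le_norm_mk f g 0 y)

lemma inl_comp_eq_inr_comp : (inl f g).comp f = (inr f g).comp g := by
  ext z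
  refine (Submodule.Quotient.eq _).2 ?_
  simpa [← WithLp.toLp_sub] using toLp_mem_pushoutSubmodule f g z

instance [SeparableSpace X] [SeparableSpace Y] : SeparableSpace (Pushout f g) :=
  (QuotientAddGroup.isQuotientMap_mk _).separableSpace

end Pushout

end LinearIsometry

theorem separable_banach_amalgamation_general
    (Z X Y : Type) [NormedAddCommGroup Z] [NormedSpace ℝ Z]
    [NormedAddCommGroup X] [NormedSpace ℝ X] [CompleteSpace X] [SeparableSpace X]
    [NormedAddCommGroup Y] [NormedSpace ℝ Y] [CompleteSpace Y] [SeparableSpace Y]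
    (f : Z →ₗᵢ[ℝ] X) (g : Z →ₗᵢ[ℝ] Y) :
    ∃ (W : Type) (_ : NormedAddCommGroup W) (_ : NormedSpace ℝ W) (_ : CompleteSpace W)
      (_ : SeparableSpace W) (f' : X →ₗᵢ[ℝ] W) (g' : Y →ₗᵢ[ℝ] W),
      f'.comp f = g'.comp g :=
  ⟨LinearIsometry.Pushout f g, inferInstance, inferInstance, inferInstance, inferInstance,
    LinearIsometry.Pushout.inl f g, LinearIsometry.Pushout.inr f g,
    LinearIsometry.Pushout.inl_comp_eq_inr_comp f g⟩

/-- the category of separable Banach spaces with linear isometric embeddings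
has the amalgamation property. -/
theorem separable_banach_amalgamation
    (Z X Y : Type) [NormedAddCommGroup Z] [NormedSpace ℝ Z] [CompleteSpace Z]
    [SeparableSpace Z]
    [NormedAddCommGroup X] [NormedSpace ℝ X] [CompleteSpace X] [SeparableSpace X]
    [NormedAddCommGroup Y] [NormedSpace ℝ Y] [CompleteSpace Y] [SeparableSpace Y]
    (f : Z →ₗᵢ[ℝ] X) (g : Z →ₗᵢ[ℝ] Y) :
    ∃ (W : Type) (_ : NormedAddCommGroup W) (_ : NormedSpace ℝ W) (_ : CompleteSpace W)
      (_ : SeparableSpace W) (f' : X →ₗᵢ[ℝ] W) (g' : Y →ₗᵢ[ℝ] W),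
      f'.comp f = g'.comp g :=
  separable_banach_amalgamation_general Z X Y f g
end

section
/- Let K be a compact Hausdorff space containing at least two points, and let C(K) denote the Banach space of continuous real-valued functions on K with the supremum norm. Then there exist one-dimensional linear subspaces X, Y of C(K) and a surjective linear isometry T : X → Y which cannot be extended to a surjective linear isometry of C(K) onto itself. -/
/-- if `K` is a compact Hausdorff space with at least two points, then there
are one-dimensional subspaces `X`, `Y` of `C(K, ℝ)` and a surjective linear isometry
`T : X → Y` which cannot be extended to a surjective linear isometry of `C(K, ℝ)` onto
itself. -/
theorem exists_nonextendable_isometry_of_CK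
    (K : Type) [TopologicalSpace K] [CompactSpace K] [T2Space K]
    (hK : ∃ a b : K, a ≠ b) :
    ∃ (X Y : Submodule ℝ C(K, ℝ)), Module.finrank ℝ X = 1 ∧ Module.finrank ℝ Y = 1 ∧
      ∃ T : X ≃ₗᵢ[ℝ] Y,
        ¬ ∃ S : C(K, ℝ) ≃ₗᵢ[ℝ] C(K, ℝ), ∀ x : X, S (x : C(K, ℝ)) = (T x : C(K, ℝ)) := by
  obtain ⟨a, b, hab⟩ := hK
  haveI : Nonempty K := ⟨a⟩
  obtain ⟨f, hf0, hf1, hf01⟩ := exists_continuous_zero_one_of_isClosed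
    (isClosed_singleton (x := b)) (isClosed_singleton (x := a))
    (by simp [Set.disjoint_singleton, Ne.symm hab])
  have hfb : f b = 0 := hf0 (Set.mem_singleton b)
  have hfa : f a = 1 := hf1 (Set.mem_singleton a)
  have h1ne : (1 : C(K, ℝ)) ≠ 0 := by
    intro h
    have := congrArg (fun g : C(K, ℝ) => g a) h
    simpa using this
  have hfne : f ≠ 0 := by
    intro h
    rw [h] at hfa
    simpa using hfa
  have hn1 : ‖(1 : C(K, ℝ))‖ = 1 := by
    apply le_antisymm
    · exact (ContinuousMap.norm_le _ zero_le_one).2 (fun t => by simp)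
    · calc (1 : ℝ) = ‖(1 : C(K, ℝ)) a‖ := by simp
        _ ≤ ‖(1 : C(K, ℝ))‖ := ContinuousMap.norm_coe_le_norm _ a
  have hnf : ‖f‖ = 1 := by
    apply le_antisymm
    · exact (ContinuousMap.norm_le _ zero_le_one).2
        (fun t => by rw [Real.norm_eq_abs, abs_le]; constructor
                     · linarith [(hf01 t).1]
                     · exact (hf01 t).2)
    · calc (1 : ℝ) = ‖f a‖ := by simp [hfa]
        _ ≤ ‖f‖ := ContinuousMap.norm_coe_le_norm f a
  refine ⟨Submodule.span ℝ {1}, Submodule.span ℝ {f},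
    finrank_span_singleton h1ne, finrank_span_singleton hfne, ?_⟩
  set E : (Submodule.span ℝ {(1 : C(K, ℝ))}) ≃ₗ[ℝ] (Submodule.span ℝ {f}) :=
    (LinearEquiv.toSpanNonzeroSingleton ℝ C(K, ℝ) 1 h1ne).symm.trans
      (LinearEquiv.toSpanNonzeroSingleton ℝ C(K, ℝ) f hfne) with hE
  have hEapp : ∀ c : ℝ,
      E (LinearEquiv.toSpanNonzeroSingleton ℝ C(K, ℝ) 1 h1ne c) =
        LinearEquiv.toSpanNonzeroSingleton ℝ C(K, ℝ) f hfne c := by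
    intro c
    rw [hE, LinearEquiv.trans_apply, LinearEquiv.symm_apply_apply]
  have hEcoe : ∀ c : ℝ,
      (E (LinearEquiv.toSpanNonzeroSingleton ℝ C(K, ℝ) 1 h1ne c) : C(K, ℝ)) = c • f := by
    intro c
    rw [hEapp, LinearEquiv.toSpanNonzeroSingleton_apply]
  have hnorm : ∀ x : Submodule.span ℝ {(1 : C(K, ℝ))}, ‖E x‖ = ‖x‖ := by
    intro x
    obtain ⟨c, hc⟩ := Submodule.mem_span_singleton.1 x.2
    have hx : x = LinearEquiv.toSpanNonzeroSingleton ℝ C(K, ℝ) 1 h1ne c :=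
      Subtype.ext (by simpa using hc.symm)
    calc ‖E x‖ = ‖(E x : C(K, ℝ))‖ := rfl
      _ = ‖c • f‖ := by rw [hx, hEcoe c]
      _ = ‖c‖ := (norm_smul c f).trans (by rw [hnf, mul_one])
      _ = ‖c • (1 : C(K, ℝ))‖ := ((norm_smul c (1 : C(K, ℝ))).trans (by rw [hn1, mul_one])).symm
      _ = ‖(x : C(K, ℝ))‖ := by rw [hc]
      _ = ‖x‖ := rfl
  refine ⟨⟨E, hnorm⟩, ?_⟩
  rintro ⟨S, hS⟩
  -- S sends 1 to f
  have hS1 : S 1 = f := by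
    have h := hS (LinearEquiv.toSpanNonzeroSingleton ℝ C(K, ℝ) 1 h1ne 1)
    have hx : ((LinearEquiv.toSpanNonzeroSingleton ℝ C(K, ℝ) 1 h1ne 1 :
        Submodule.span ℝ {(1 : C(K, ℝ))}) : C(K, ℝ)) = 1 := by
      rw [LinearEquiv.toSpanNonzeroSingleton_apply]; exact one_smul _ _
    rw [hx] at h
    have h2 : S 1 = (E (LinearEquiv.toSpanNonzeroSingleton ℝ C(K, ℝ) 1 h1ne 1) : C(K, ℝ)) := h
    rw [h2, hEcoe 1, one_smul]
  -- the perturbation g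
  set g : C(K, ℝ) := (ContinuousMap.const K (1/2 : ℝ) - f) ⊔ 0 with hg
  have hgapp : ∀ t, g t = max (1/2 - f t) 0 := fun t => rfl
  have hgb : g b = 1/2 := by simp [hgapp, hfb]
  have hgne : g ≠ 0 := by
    intro h
    have := congrArg (fun u : C(K, ℝ) => u b) h
    simp [hgb] at this
  -- pointwise bounds
  have hbd : ∀ (ε : ℝ), ε = 1 ∨ ε = -1 → ‖f + ε • g‖ ≤ 1 := by
    intro ε hε
    refine (ContinuousMap.norm_le _ zero_le_one).2 (fun t => ?_)
    have h0 := (hf01 t).1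
    have h1 := (hf01 t).2
    have hgt := hgapp t
    rw [Real.norm_eq_abs, abs_le]
    rcases le_or_gt (1/2 : ℝ) (f t) with h | h
    · have : g t = 0 := by rw [hgt]; simp; linarith
      simp only [ContinuousMap.add_apply, ContinuousMap.smul_apply, this, smul_zero, add_zero]
      constructor <;> linarith
    · have : g t = 1/2 - f t := by rw [hgt]; simp; linarith
      simp only [ContinuousMap.add_apply, ContinuousMap.smul_apply, this, smul_eq_mul]
      rcases hε with h' | h' <;> rw [h'] <;> constructor <;> nlinarith
  -- pull back via S
  have key : ∀ (ε : ℝ), ε = 1 ∨ ε = -1 → ‖1 + ε • S.symm g‖ ≤ 1 := by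
    intro ε hε
    have : (1 : C(K, ℝ)) + ε • S.symm g = S.symm (f + ε • g) := by
      rw [map_add, map_smul, ← hS1, S.symm_apply_apply]
    rw [this, S.symm.norm_map]
    exact hbd ε hε
  have hzero : S.symm g = 0 := by
    ext t
    have h1 := ContinuousMap.norm_coe_le_norm (1 + (1 : ℝ) • S.symm g) t
    have h2 := ContinuousMap.norm_coe_le_norm (1 + (-1 : ℝ) • S.symm g) t
    have k1 := le_trans h1 (key 1 (Or.inl rfl))
    have k2 := le_trans h2 (key (-1) (Or.inr rfl))
    simp only [ContinuousMap.add_apply, ContinuousMap.smul_apply, ContinuousMap.one_apply, ContinuousMap.neg_apply,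
      one_smul, neg_smul, smul_eq_mul, one_mul, Real.norm_eq_abs, abs_le] at k1 k2
    have : (S.symm g) t = 0 := by
      rcases k1 with ⟨k1a, k1b⟩
      rcases k2 with ⟨k2a, k2b⟩
      linarith
    simpa using this
  have : g = 0 := by
    have := congrArg S hzero
    rwa [S.apply_symm_apply, map_zero] at this
  exact hgne this
end

section
/- Let α be a countable ordinal and let V be a nonempty countable bounded binary tree of height α+1 which is healthy. Then every nonempty countable bounded binary tree T of height ≤ α+1 is isomorphic to a closed initial segment of V; that is, there is a meet-semilattice embedding of T into V whose image is a closed initial segment of V. -/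
/-! Trees: partially ordered sets which are meet-semilattices with well-ordered sets of
predecessors. We work with a type `T` carrying a `SemilatticeInf` instance together with the
assumption that `{x | x < t}` is well-ordered for each `t`. -/

/-- The height of an element of a tree: the order type of its set of predecessors. -/
noncomputable def treeHt {T : Type} [SemilatticeInf T]
    [∀ t : T, IsWellOrder {x : T // x < t} (· < ·)] (t : T) : Ordinal :=
  Ordinal.type ((· < ·) : {x : T // x < t} → {x : T // x < t} → Prop)

/-- The height of a tree: the least ordinal strictly greater than the heights of all of its
elements. -/
noncomputable def treeHeight (T : Type) [SemilatticeInf T]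
    [∀ t : T, IsWellOrder {x : T // x < t} (· < ·)] : Ordinal :=
  Ordinal.lsub fun t : T => treeHt t

/-- `s` is an immediate successor of `t`. -/
def ImmSucc {T : Type} [Preorder T] (t s : T) : Prop :=
  t < s ∧ ∀ x : T, t < x → x < s → False

/-- A tree is binary if every element has at most two immediate successors. -/
def BinaryOrderTree (T : Type) [Preorder T] : Prop :=
  ∀ t a b c : T, ImmSucc t a → ImmSucc t b → ImmSucc t c → a = b ∨ a = c ∨ b = c

/-- A tree is bounded if every element lies below some maximal element. -/
def BoundedTree (T : Type) [Preorder T] : Prop :=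
  ∀ x : T, ∃ t : T, x ≤ t ∧ IsMax t

/-- A closed initial segment: a downward-closed subset containing the suprema of all chains
contained in it. -/
def ClosedInitialSegment {T : Type} [Preorder T] (A : Set T) : Prop :=
  IsLowerSet A ∧ ∀ C : Set T, C ⊆ A → IsChain (· ≤ ·) C → ∀ s : T, IsLUB C s → s ∈ A

/-- A tree is healthy if every non-maximal element has at least two immediate successors,
and above every element there are elements of arbitrarily large height below the height of
the tree. -/
def HealthyTree (T : Type) [SemilatticeInf T]
    [∀ t : T, IsWellOrder {x : T // x < t} (· < ·)] : Prop :=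
  (∀ t : T, ¬IsMax t → ∃ a b : T, a ≠ b ∧ ImmSucc t a ∧ ImmSucc t b) ∧
  (∀ t : T, ∀ β : Ordinal, β < treeHeight T → ∃ s : T, t ≤ s ∧ β ≤ treeHt s)

/-- A meet-semilattice embedding: an order-embedding preserving binary infima. -/
def InfEmbedding {T V : Type} [SemilatticeInf T] [SemilatticeInf V] (f : T → V) : Prop :=
  (∀ a b : T, f a ≤ f b ↔ a ≤ b) ∧ ∀ a b : T, f (a ⊓ b) = f a ⊓ f b

/-!
Enumerate the maximal elements of `T` as `M 0, M 1, …` and build branches `W n` of `V` one at a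
time so that `treeHt (W j ⊓ W k) = treeHt (M j ⊓ M k)`; sending `x ≤ M j` to the point of height
`treeHt x` below `W j` is then a meet-semilattice embedding onto the lower closure of the `W n`.
A new branch leaves the earlier ones at the copy `P` of the point `p` where `M n` leaves them: as
`T` is binary, at most one immediate successor of `P` is already used, and healthiness provides a
free one and lets the branch climb to the required height.

For closedness, enumerate `V` as `e 0, e 1, …` and make each new branch comparable with the first
`e m` above its fresh point. If `e ms` were the supremum of a chain in the image but not in the
image, infinitely many branches would start below `e ms`, each settling a different `e m` with
`m ≤ ms`.
-/

theorem infEmbedding_of_isLowerSet_range {T V : Type} [SemilatticeInf T] [SemilatticeInf V]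
    {f : T → V} (hf : ∀ a b, f a ≤ f b ↔ a ≤ b) (hrange : IsLowerSet (Set.range f)) :
    InfEmbedding f := by
  refine ⟨hf, fun a b => le_antisymm (le_inf ((hf _ _).2 inf_le_left) ((hf _ _).2 inf_le_right)) ?_⟩
  obtain ⟨c, hc⟩ := hrange (inf_le_left : f a ⊓ f b ≤ f a) (Set.mem_range_self a)
  have hca : c ≤ a := (hf _ _).1 (hc ▸ inf_le_left)
  have hcb : c ≤ b := (hf _ _).1 (hc ▸ inf_le_right)
  exact hc ▸ (hf _ _).2 (le_inf hca hcb)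

theorem mem_lowerClosure_range {ι V : Type} [Preorder V] {W : ι → V} {v : V} :
    v ∈ lowerClosure (Set.range W) ↔ ∃ j, v ≤ W j := by
  simp only [mem_lowerClosure, Set.exists_range_iff]

section Tree

variable {X : Type} [SemilatticeInf X] [∀ t : X, IsWellOrder {x : X // x < t} (· < ·)]

theorem treeHt_lt_treeHeight (t : X) : treeHt t < treeHeight X :=
  Ordinal.lt_iSup_add_one _ t

theorem isChain_Iic (t : X) : IsChain (· ≤ ·) (Set.Iic t) := by
  intro x hx y hy _
  rcases hx.eq_or_lt with rfl | hxt
  · exact Or.inr hy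
  rcases hy.eq_or_lt with rfl | hyt
  · exact Or.inl hxt.le
  rcases trichotomous_of (· < ·) (⟨x, hxt⟩ : {z : X // z < t}) ⟨y, hyt⟩ with h | h | h
  · exact Or.inl (Subtype.mk_lt_mk.1 h).le
  · exact Or.inl (congrArg Subtype.val h).le
  · exact Or.inr (Subtype.mk_lt_mk.1 h).le

theorem treeHt_eq_typein {t : X} (x : {z : X // z < t}) :
    treeHt x.1 = Ordinal.typein ((· < ·) : {z : X // z < t} → {z : X // z < t} → Prop) x := by
  rw [← Ordinal.type_subrel]
  exact RelIso.ordinalType_congr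
    ⟨⟨fun z => ⟨⟨z.1, z.2.trans x.2⟩, z.2⟩, fun z => ⟨z.1.1, z.2⟩, fun _ => rfl, fun _ => rfl⟩,
      Iff.rfl⟩

theorem treeHt_strictMono : StrictMono (treeHt : X → Ordinal) := fun x y hxy => by
  rw [treeHt_eq_typein (⟨x, hxy⟩ : {z : X // z < y})]
  exact Ordinal.typein_lt_type _ _

theorem le_of_treeHt_le {x y t : X} (hx : x ≤ t) (hy : y ≤ t) (h : treeHt x ≤ treeHt y) :
    x ≤ y :=
  ((isChain_Iic t).total hx hy).elim id fun hyx =>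
    hyx.eq_or_lt.elim Eq.ge fun hlt => absurd h (treeHt_strictMono hlt).not_ge

theorem lt_of_treeHt_lt {x y t : X} (hx : x ≤ t) (hy : y ≤ t) (h : treeHt x < treeHt y) :
    x < y :=
  (le_of_treeHt_le hx hy h.le).lt_of_ne fun hxy => h.ne (congrArg treeHt hxy)

theorem eq_of_treeHt_eq {x y t : X} (hx : x ≤ t) (hy : y ≤ t) (h : treeHt x = treeHt y) :
    x = y :=
  (le_of_treeHt_le hx hy h.le).antisymm (le_of_treeHt_le hy hx h.ge)

theorem exists_le_treeHt_eq (t : X) {β : Ordinal} (hβ : β ≤ treeHt t) :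
    ∃ x ≤ t, treeHt x = β := by
  rcases hβ.eq_or_lt with rfl | hβ
  · exact ⟨t, le_rfl, rfl⟩
  obtain ⟨x, hx⟩ := Ordinal.typein_surj _ hβ
  exact ⟨x.1, x.2.le, (treeHt_eq_typein x).trans hx⟩

/-- The element of height `β` below `t` (junk, namely `t`, if `treeHt t < β`). -/
noncomputable def ancestor (t : X) (β : Ordinal) : X :=
  if h : β ≤ treeHt t then (exists_le_treeHt_eq t h).choose else t

theorem ancestor_le (t : X) (β : Ordinal) : ancestor t β ≤ t := by
  unfold ancestor
  split_ifs with h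
  exacts [(exists_le_treeHt_eq t h).choose_spec.1, le_rfl]

theorem treeHt_ancestor {t : X} {β : Ordinal} (h : β ≤ treeHt t) : treeHt (ancestor t β) = β := by
  rw [ancestor, dif_pos h]
  exact (exists_le_treeHt_eq t h).choose_spec.2

theorem eq_ancestor {x t : X} (h : x ≤ t) : x = ancestor t (treeHt x) :=
  eq_of_treeHt_eq h (ancestor_le t _) (treeHt_ancestor (treeHt_strictMono.monotone h)).symm

theorem ancestor_le_iff {t u : X} {β : Ordinal} (h : β ≤ treeHt t) :
    ancestor t β ≤ u ↔ β ≤ treeHt (t ⊓ u) := by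
  constructor
  · intro hu
    rw [← treeHt_ancestor h]
    exact treeHt_strictMono.monotone (le_inf (ancestor_le t β) hu)
  · intro hβ
    have hsame : ancestor (t ⊓ u) β = ancestor t β :=
      eq_of_treeHt_eq ((ancestor_le _ β).trans inf_le_left) (ancestor_le t β)
        ((treeHt_ancestor hβ).trans (treeHt_ancestor h).symm)
    exact hsame ▸ (ancestor_le _ β).trans inf_le_right

theorem ancestor_eq_ancestor {t u : X} {β : Ordinal} (h : β ≤ treeHt (t ⊓ u)) :
    ancestor t β = ancestor u β := by
  have ht : β ≤ treeHt t := h.trans (treeHt_strictMono.monotone inf_le_left)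
  have hu : β ≤ treeHt u := h.trans (treeHt_strictMono.monotone inf_le_right)
  exact eq_of_treeHt_eq ((ancestor_le_iff ht).2 h) (ancestor_le u β)
    ((treeHt_ancestor ht).trans (treeHt_ancestor hu).symm)

theorem le_iff_of_le_of_le {x y t u : X} (hx : x ≤ t) (hy : y ≤ u) :
    x ≤ y ↔ treeHt x ≤ treeHt y ∧ treeHt x ≤ treeHt (t ⊓ u) := by
  constructor
  · intro hxy
    exact ⟨treeHt_strictMono.monotone hxy,
      treeHt_strictMono.monotone (le_inf hx (hxy.trans hy))⟩
  · rintro ⟨hxy, hxtu⟩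
    have hxu : x ≤ u := (le_of_treeHt_le hx inf_le_left hxtu).trans inf_le_right
    exact le_of_treeHt_le hxu hy hxy

theorem treeHt_inf_of_le {x t : X} (h : x ≤ t) (u : X) :
    treeHt (x ⊓ u) = min (treeHt x) (treeHt (t ⊓ u)) := by
  rcases (isChain_Iic t).total h (inf_le_left : t ⊓ u ≤ t) with hx | hx
  · rw [inf_eq_left.2 (hx.trans inf_le_right),
      min_eq_left (treeHt_strictMono.monotone hx)]
  · rw [le_antisymm (inf_le_inf_right u h) (le_inf hx inf_le_right),
      min_eq_right (treeHt_strictMono.monotone hx)]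

theorem exists_lt_mem_of_isLUB {C : Set X} {s x : X} (hC : IsLUB C s) (hsC : s ∉ C)
    (hx : x < s) : ∃ c ∈ C, x < c ∧ c < s := by
  have hub : x ∉ upperBounds C := fun h => (hC.2 h).not_gt hx
  simp only [mem_upperBounds, not_forall] at hub
  obtain ⟨c, hc, hcx⟩ := hub
  have hcs : c < s := (hC.1 hc).lt_of_ne fun h => hsC (h ▸ hc)
  refine ⟨c, hc, ?_, hcs⟩
  rcases (isChain_Iic s).total hx.le hcs.le with h | h
  exacts [h.lt_of_ne fun h' => hcx (h' ▸ le_rfl), absurd h hcx]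

end Tree

section ImmSucc

variable {X : Type} [SemilatticeInf X] [∀ t : X, IsWellOrder {x : X // x < t} (· < ·)]

theorem le_of_lt_of_immSucc {x s z : X} (h : ImmSucc x s) (hz : z < s) : z ≤ x :=
  ((isChain_Iic s).total hz.le h.1.le).elim id
    fun hxz => hxz.eq_or_lt.elim Eq.ge fun hxz => (h.2 z hxz hz).elim

theorem treeHt_immSucc {x s : X} (h : ImmSucc x s) :
    treeHt s = Order.succ (treeHt x) := by
  refine le_antisymm (not_lt.1 fun hlt => ?_) (Order.succ_le_of_lt (treeHt_strictMono h.1))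
  have hc : treeHt (ancestor s (Order.succ (treeHt x))) = Order.succ (treeHt x) :=
    treeHt_ancestor hlt.le
  refine h.2 _ (lt_of_treeHt_lt h.1.le (ancestor_le _ _) ?_)
    (lt_of_treeHt_lt (ancestor_le _ _) le_rfl (hc ▸ hlt))
  rw [hc]
  exact Order.lt_succ _

theorem immSucc_ancestor {x t : X} (h : x < t) :
    ImmSucc x (ancestor t (Order.succ (treeHt x))) := by
  have hc := treeHt_ancestor (Order.succ_le_of_lt (treeHt_strictMono h))
  refine ⟨lt_of_treeHt_lt h.le (ancestor_le _ _) (by rw [hc]; exact Order.lt_succ _),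
    fun z hxz hzc => ?_⟩
  have := treeHt_strictMono hzc
  rw [hc, Order.lt_succ_iff] at this
  exact (treeHt_strictMono hxz).not_ge this

theorem inf_eq_inf_of_immSucc {x a w u : X} (ha : ImmSucc x a) (haw : a ≤ w) (hau : ¬a ≤ u) :
    w ⊓ u = x ⊓ u := by
  have hlt : w ⊓ u < a := by
    rcases (isChain_Iic w).total inf_le_left haw with h | h
    · exact h.lt_of_ne fun h' => hau (h' ▸ inf_le_right)
    · exact absurd (h.trans inf_le_right) hau
  exact le_antisymm (le_inf (le_of_lt_of_immSucc ha hlt) inf_le_right)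
    (inf_le_inf_right u (ha.1.le.trans haw))

theorem treeHt_inf_le_of_immSucc {x a b t u : X} (ha : ImmSucc x a) (hb : ImmSucc x b)
    (hab : a ≠ b) (hat : a ≤ t) (hbu : b ≤ u) : treeHt (t ⊓ u) ≤ treeHt x := by
  by_contra! hlt
  have hc := treeHt_ancestor (Order.succ_le_of_lt hlt)
  have hca : ancestor (t ⊓ u) (Order.succ (treeHt x)) = a :=
    eq_of_treeHt_eq ((ancestor_le _ _).trans inf_le_left) hat (hc.trans (treeHt_immSucc ha).symm)
  have hcb : ancestor (t ⊓ u) (Order.succ (treeHt x)) = b :=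
    eq_of_treeHt_eq ((ancestor_le _ _).trans inf_le_right) hbu (hc.trans (treeHt_immSucc hb).symm)
  exact hab (hca.symm.trans hcb)

theorem BinaryOrderTree.lt_treeHt_inf {x t₁ t₂ t₃ : X} (hX : BinaryOrderTree X)
    (h₁ : x < t₁) (h₂ : x < t₂) (h₃ : x < t₃) :
    treeHt x < treeHt (t₁ ⊓ t₂) ∨ treeHt x < treeHt (t₁ ⊓ t₃) ∨ treeHt x < treeHt (t₂ ⊓ t₃) := by
  have key : ∀ {t u : X}, x < t → x < u →
      ancestor t (Order.succ (treeHt x)) = ancestor u (Order.succ (treeHt x)) →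
      treeHt x < treeHt (t ⊓ u) := fun {t u} ht hu htu =>
    Order.succ_le_iff.1 <| (ancestor_le_iff (Order.succ_le_of_lt (treeHt_strictMono ht))).1
      (htu ▸ ancestor_le u _)
  rcases hX x _ _ _ (immSucc_ancestor h₁) (immSucc_ancestor h₂) (immSucc_ancestor h₃)
    with h | h | h
  exacts [Or.inl (key h₁ h₂ h), Or.inr (Or.inl (key h₁ h₃ h)), Or.inr (Or.inr (key h₂ h₃ h))]

theorem HealthyTree.exists_le_treeHt_eq {v : X} {γ : Ordinal} (hX : HealthyTree X)
    (hγ : γ < treeHeight X) (hv : treeHt v ≤ γ) : ∃ w, v ≤ w ∧ treeHt w = γ := by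
  obtain ⟨z, hvz, hγz⟩ := hX.2 v γ hγ
  exact ⟨ancestor z γ, le_of_treeHt_le hvz (ancestor_le z γ) (by rwa [treeHt_ancestor hγz]),
    treeHt_ancestor hγz⟩

theorem HealthyTree.exists_comparable {a u : X} {γ : Ordinal} (hX : HealthyTree X)
    (hγ : γ < treeHeight X) (hau : a ≤ u) (ha : treeHt a ≤ γ) :
    ∃ w, a ≤ w ∧ treeHt w = γ ∧ (u ≤ w ∨ w ≤ u) := by
  by_cases hu : treeHt u ≤ γ
  · obtain ⟨w, huw, hw⟩ := hX.exists_le_treeHt_eq hγ hu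
    exact ⟨w, hau.trans huw, hw, Or.inl huw⟩
  · have hγu := (not_le.1 hu).le
    exact ⟨ancestor u γ, le_of_treeHt_le hau (ancestor_le u γ) (by rwa [treeHt_ancestor hγu]),
      treeHt_ancestor hγu, Or.inr (ancestor_le u γ)⟩

end ImmSucc

section Transport

variable {T V : Type} [SemilatticeInf T] [∀ t : T, IsWellOrder {x : T // x < t} (· < ·)]
  [SemilatticeInf V] [∀ t : V, IsWellOrder {x : V // x < t} (· < ·)]
  {ι : Type} (M : ι → T) (W : ι → V) (hM : ∀ x, ∃ j, x ≤ M j)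

noncomputable def transport (x : T) : V :=
  ancestor (W (hM x).choose) (treeHt x)

variable {M W} (hMW : ∀ j k, treeHt (W j ⊓ W k) = treeHt (M j ⊓ M k))
include hMW

theorem treeHt_eq_of_treeHt_inf_eq (j : ι) : treeHt (W j) = treeHt (M j) := by
  simpa only [inf_idem] using hMW j j

theorem transport_eq {x : T} {j : ι} (hx : x ≤ M j) :
    transport M W hM x = ancestor (W j) (treeHt x) :=
  ancestor_eq_ancestor (by
    rw [hMW]; exact treeHt_strictMono.monotone (le_inf (hM x).choose_spec hx))

theorem treeHt_transport (x : T) : treeHt (transport M W hM x) = treeHt x := by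
  rw [transport, treeHt_ancestor]
  rw [treeHt_eq_of_treeHt_inf_eq hMW]
  exact treeHt_strictMono.monotone (hM x).choose_spec

theorem transport_le {x : T} {j : ι} (hx : x ≤ M j) : transport M W hM x ≤ W j :=
  transport_eq hM hMW hx ▸ ancestor_le _ _

theorem transport_le_transport_iff (x y : T) :
    transport M W hM x ≤ transport M W hM y ↔ x ≤ y := by
  have hx := (hM x).choose_spec
  have hy := (hM y).choose_spec
  rw [le_iff_of_le_of_le (transport_le hM hMW hx) (transport_le hM hMW hy),
    le_iff_of_le_of_le hx hy, treeHt_transport hM hMW, treeHt_transport hM hMW, hMW]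

theorem range_transport :
    Set.range (transport M W hM) = lowerClosure (Set.range W) := by
  ext v
  rw [SetLike.mem_coe, mem_lowerClosure_range, Set.mem_range]
  constructor
  · rintro ⟨x, rfl⟩
    exact ⟨_, transport_le hM hMW (hM x).choose_spec⟩
  · rintro ⟨j, hv⟩
    have hvM : treeHt v ≤ treeHt (M j) :=
      treeHt_eq_of_treeHt_inf_eq hMW j ▸ treeHt_strictMono.monotone hv
    refine ⟨ancestor (M j) (treeHt v), ?_⟩
    rw [transport_eq hM hMW (ancestor_le _ _), treeHt_ancestor hvM]
    exact (eq_ancestor hv).symm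

theorem not_lt_of_treeHt_inf_eq (hMmax : ∀ i, IsMax (M i)) (j k : ι) : ¬W j < W k := by
  intro hjk
  have hM : treeHt (M j ⊓ M k) = treeHt (M j) := by
    rw [← hMW, inf_eq_left.2 hjk.le, treeHt_eq_of_treeHt_inf_eq hMW]
  have hMjk : M j ≤ M k := inf_eq_left.1 (eq_of_treeHt_eq inf_le_left le_rfl hM)
  have := treeHt_strictMono hjk
  rw [treeHt_eq_of_treeHt_inf_eq hMW, treeHt_eq_of_treeHt_inf_eq hMW,
    le_antisymm hMjk (hMmax j hMjk)] at this
  exact lt_irrefl _ this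

theorem infEmbedding_transport : InfEmbedding (transport M W hM) :=
  infEmbedding_of_isLowerSet_range (transport_le_transport_iff hM hMW)
    (range_transport hM hMW ▸ (lowerClosure _).lower)

end Transport

section Construction

variable {T V : Type} [SemilatticeInf T] [∀ t : T, IsWellOrder {x : T // x < t} (· < ·)]
  [SemilatticeInf V] [∀ t : V, IsWellOrder {x : V // x < t} (· < ·)]

def IsFreshPoint {n : ℕ} (g : Fin n → V) (a : V) : Prop :=
  (∀ z < a, ∃ j, z ≤ g j) ∧ ∀ j, ¬a ≤ g j

/-- The branch `w` starts at the fresh point `a` and is comparable with the first point of the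
enumeration `e` above `a`. -/
def IsBranchStart (e : ℕ → V) {n : ℕ} (g : Fin n → V) (a w : V) : Prop :=
  a ≤ w ∧ IsFreshPoint g a ∧ ∀ m, a < e m → ∃ m' ≤ m, a < e m' ∧ (e m' ≤ w ∨ w ≤ e m')

def IsBranchStep (e : ℕ → V) {n : ℕ} (g : Fin n → V) (w : V) : Prop :=
  (∃ j, w = g j) ∨ ∃ a, IsBranchStart e g a w

def IsAdmissible (e : ℕ → V) (M : ℕ → T) (n : ℕ) (g : Fin n → V) (w : V) : Prop :=
  treeHt w = treeHt (M n) ∧ (∀ j, treeHt (w ⊓ g j) = treeHt (M n ⊓ M j)) ∧ IsBranchStep e g w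

variable {M : ℕ → T} {n : ℕ} {g : Fin n → V}
  (hg : ∀ j k, treeHt (g j ⊓ g k) = treeHt (M j ⊓ M k))
include hg

section Branching

variable {j₀ : Fin n} (hj₀ : ∀ j : Fin n, treeHt (M n ⊓ M j) ≤ treeHt (M n ⊓ M j₀))
include hj₀

theorem treeHt_inf_eq_of_immSucc {a w : V}
    (ha : ImmSucc (ancestor (g j₀) (treeHt (M n ⊓ M j₀))) a) (haw : a ≤ w)
    (hfree : ∀ j, ¬a ≤ g j) (j : Fin n) : treeHt (w ⊓ g j) = treeHt (M n ⊓ M j) := by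
  set p := M n ⊓ M j₀
  set P := ancestor (g j₀) (treeHt p)
  have hP : treeHt P = treeHt p := treeHt_ancestor <| by
    rw [treeHt_eq_of_treeHt_inf_eq hg]; exact treeHt_strictMono.monotone inf_le_right
  calc treeHt (w ⊓ g j) = treeHt (P ⊓ g j) := by rw [inf_eq_inf_of_immSucc ha haw (hfree j)]
    _ = min (treeHt P) (treeHt (g j₀ ⊓ g j)) := treeHt_inf_of_le (ancestor_le _ _) _
    _ = min (treeHt p) (treeHt (M j₀ ⊓ M j)) := by rw [hP, hg]
    _ = treeHt (p ⊓ M j) := (treeHt_inf_of_le inf_le_right _).symm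
    _ = min (treeHt p) (treeHt (M n ⊓ M j)) := treeHt_inf_of_le inf_le_left _
    _ = treeHt (M n ⊓ M j) := min_eq_right (hj₀ j)

theorem exists_free_immSucc (hT : BinaryOrderTree T) (hV : HealthyTree V)
    (hMn : IsMax (M n)) (hMj₀ : IsMax (M j₀)) (hnew : M n ≠ M j₀) :
    ∃ a, ImmSucc (ancestor (g j₀) (treeHt (M n ⊓ M j₀))) a ∧ ∀ j, ¬a ≤ g j := by
  set p := M n ⊓ M j₀
  set P := ancestor (g j₀) (treeHt p)
  have hpn : p < M n := inf_lt_left.2 fun h => hnew (h.antisymm (hMn h))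
  have hpj₀ : p < M j₀ := inf_lt_right.2 fun h => hnew ((hMj₀ h).antisymm h)
  have hg₀ : treeHt (g j₀) = treeHt (M j₀) := treeHt_eq_of_treeHt_inf_eq hg j₀
  have hpg₀ : treeHt p ≤ treeHt (g j₀) := hg₀ ▸ (treeHt_strictMono hpj₀).le
  have hP : treeHt P = treeHt p := treeHt_ancestor hpg₀
  have hPg₀ : P < g j₀ := lt_of_treeHt_lt (ancestor_le _ _) le_rfl
    (by rw [hP, hg₀]; exact treeHt_strictMono hpj₀)
  obtain ⟨a, b, hab, ha, hb⟩ := hV.1 P hPg₀.not_isMax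
  have hlt : ∀ {c : V} {j : Fin n}, ImmSucc P c → c ≤ g j → p < M j := fun {c j} hc hcj => by
    have hPj : ancestor (g j₀) (treeHt p) ≤ g j := hc.1.le.trans hcj
    rw [ancestor_le_iff hpg₀, hg,
      ← ancestor_le_iff (treeHt_strictMono hpj₀).le, ← eq_ancestor inf_le_right] at hPj
    refine lt_of_le_of_ne hPj fun h => ?_
    have := (treeHt_immSucc hc).symm.trans_le (treeHt_strictMono.monotone hcj)
    rw [treeHt_eq_of_treeHt_inf_eq hg, ← h, hP] at this
    exact (Order.lt_succ _).not_ge this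
  -- otherwise `M ja`, `M jb` and `M n` leave `p` through three different immediate successors
  by_contra! hused
  obtain ⟨⟨ja, haj⟩, ⟨jb, hbj⟩⟩ : (∃ j, a ≤ g j) ∧ ∃ j, b ≤ g j :=
    ⟨hused a ha, hused b hb⟩
  rcases hT.lt_treeHt_inf (hlt ha haj) (hlt hb hbj) hpn with h | h | h
  · rw [← hg, ← hP] at h
    exact (treeHt_inf_le_of_immSucc ha hb hab haj hbj).not_gt h
  · exact (inf_comm (M ja) _ ▸ h).not_ge (hj₀ ja)
  · exact (inf_comm (M jb) _ ▸ h).not_ge (hj₀ jb)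

end Branching

theorem exists_isFreshPoint [Nonempty V] (hT : BinaryOrderTree T) (hV : HealthyTree V)
    (hMmax : ∀ i, IsMax (M i)) (hnew : ∀ j : Fin n, M n ≠ M j) :
    ∃ a, treeHt a ≤ treeHt (M n) ∧ IsFreshPoint g a ∧
      ∀ w, a ≤ w → ∀ j, treeHt (w ⊓ g j) = treeHt (M n ⊓ M j) := by
  rcases n.eq_zero_or_pos with rfl | hn
  · have hr : treeHt (ancestor (Classical.arbitrary V) 0) = 0 := treeHt_ancestor zero_le
    refine ⟨ancestor (Classical.arbitrary V) 0, hr.trans_le zero_le,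
      ⟨fun z hz => absurd (hr ▸ treeHt_strictMono hz) not_lt_zero, finZeroElim⟩,
      fun _ _ => finZeroElim⟩
  have : Nonempty (Fin n) := ⟨⟨0, hn⟩⟩
  obtain ⟨j₀, hj₀⟩ := Finite.exists_max fun j : Fin n => treeHt (M n ⊓ M j)
  obtain ⟨a, ha, hfree⟩ :=
    exists_free_immSucc hg hj₀ hT hV (hMmax n) (hMmax j₀) (hnew j₀)
  refine ⟨a, ?_, ⟨fun z hz => ⟨j₀, (le_of_lt_of_immSucc ha hz).trans (ancestor_le _ _)⟩, hfree⟩,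
    fun w haw => treeHt_inf_eq_of_immSucc hg hj₀ ha haw hfree⟩
  rw [treeHt_immSucc ha, treeHt_ancestor]
  · exact Order.succ_le_of_lt <| treeHt_strictMono <|
      inf_lt_left.2 fun h => hnew j₀ (h.antisymm (hMmax n h))
  · rw [treeHt_eq_of_treeHt_inf_eq hg]
    exact treeHt_strictMono.monotone inf_le_right

theorem exists_isAdmissible [Nonempty V] (e : ℕ → V) (hT : BinaryOrderTree T)
    (hV : HealthyTree V) (hMmax : ∀ i, IsMax (M i)) (hMV : treeHt (M n) < treeHeight V) :
    ∃ w, IsAdmissible e M n g w := by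
  by_cases hdup : ∃ j : Fin n, M n = M j
  · obtain ⟨j, hj⟩ := hdup
    exact ⟨g j, by rw [treeHt_eq_of_treeHt_inf_eq hg, hj], fun k => by rw [hg, hj],
      Or.inl ⟨j, rfl⟩⟩
  push Not at hdup
  obtain ⟨a, ha, hfresh, hinf⟩ := exists_isFreshPoint hg hT hV hMmax hdup
  by_cases habove : ∃ m, a < e m
  · classical
    obtain ⟨w, haw, hw, hcomp⟩ := hV.exists_comparable hMV (Nat.find_spec habove).le ha
    exact ⟨w, hw, hinf w haw, Or.inr ⟨a, haw, hfresh, fun m hm =>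
      ⟨_, Nat.find_min' habove hm, Nat.find_spec habove, hcomp⟩⟩⟩
  · obtain ⟨w, haw, hw⟩ := hV.exists_le_treeHt_eq hMV ha
    exact ⟨w, hw, hinf w haw, Or.inr ⟨a, haw, hfresh, fun m hm => (habove ⟨m, hm⟩).elim⟩⟩

end Construction

section Sequence

variable {T V : Type} [SemilatticeInf T] [∀ t : T, IsWellOrder {x : T // x < t} (· < ·)]
  [SemilatticeInf V] [∀ t : V, IsWellOrder {x : V // x < t} (· < ·)] (e : ℕ → V) (M : ℕ → T)

theorem treeHt_inf_eq_of_isAdmissible {W : ℕ → V} {j k : ℕ}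
    (hj : IsAdmissible e M j (fun i : Fin j => W i) (W j))
    (hk : IsAdmissible e M k (fun i : Fin k => W i) (W k)) :
    treeHt (W j ⊓ W k) = treeHt (M j ⊓ M k) := by
  rcases lt_trichotomy j k with h | rfl | h
  · rw [inf_comm, inf_comm (M j)]
    exact hk.2.1 ⟨j, h⟩
  · simpa only [inf_idem] using hj.1
  · exact hj.2.1 ⟨k, h⟩

variable [Nonempty V]

noncomputable def branchSeq (n : ℕ) : V :=
  Classical.epsilon (IsAdmissible e M n fun j : Fin n => branchSeq j)
decreasing_by exact j.2

theorem isAdmissible_branchSeq (hT : BinaryOrderTree T) (hV : HealthyTree V)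
    (hMmax : ∀ i, IsMax (M i)) (hMV : ∀ i, treeHt (M i) < treeHeight V) (n : ℕ) :
    IsAdmissible e M n (fun j : Fin n => branchSeq e M j) (branchSeq e M n) := by
  induction n using Nat.strong_induction_on with
  | _ n ih =>
    rw [branchSeq]
    exact Classical.epsilon_spec <| exists_isAdmissible
      (fun j k => treeHt_inf_eq_of_isAdmissible e M (ih j j.2) (ih k k.2)) e hT hV hMmax (hMV n)

end Sequence

section Closed

variable {V : Type} [SemilatticeInf V] [∀ t : V, IsWellOrder {x : V // x < t} (· < ·)]
  {e W : ℕ → V}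

theorem IsFreshPoint.not_lt_of_comparable {s a : V} {k k' m : ℕ} (hWs : ∀ j, ¬W j < s)
    (hkk' : k < k') (hcomp : e m ≤ W k ∨ W k ≤ e m)
    (ha : IsFreshPoint (fun j : Fin k' => W j) a) (has : a < s) : ¬a < e m := by
  intro ham
  have hfree : ¬a ≤ W k := ha.2 ⟨k, hkk'⟩
  rcases hcomp with h | h
  · exact hfree (ham.le.trans h)
  · rcases (isChain_Iic (e m)).total ham.le h with h' | h'
    exacts [hfree h', hWs k (h'.trans_lt has)]

variable (hstep : ∀ n, IsBranchStep e (fun j : Fin n => W j) (W n))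
include hstep

theorem exists_gt_isBranchStart_lt {s : V}
    (hs : ∀ x < s, ∃ y ∈ lowerClosure (Set.range W), x < y ∧ y < s) (hsW : ∀ j, ¬s ≤ W j)
    (N : ℕ) : ∃ k > N, ∃ a < s, IsBranchStart e (fun j : Fin k => W j) a (W k) := by
  have hlt : ∀ j, W j ⊓ s < s := fun j =>
    inf_le_right.lt_of_ne fun h => hsW j (inf_eq_right.1 h)
  obtain ⟨j₁, hj₁⟩ := Finite.exists_max fun j : Fin (N + 1) => treeHt (W j ⊓ s)
  obtain ⟨y, hyW, hxy, hys⟩ := hs _ (hlt j₁)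
  rw [mem_lowerClosure_range] at hyW
  classical
  have hyk : y ≤ W (Nat.find hyW) := Nat.find_spec hyW
  have hNk : N < Nat.find hyW := by
    by_contra! hkN
    have hy : treeHt y ≤ treeHt (W j₁ ⊓ s) :=
      (treeHt_strictMono.monotone (le_inf hyk hys.le)).trans (hj₁ ⟨_, Nat.lt_succ_of_le hkN⟩)
    exact (treeHt_strictMono hxy).not_ge hy
  rcases hstep (Nat.find hyW) with ⟨j, hj⟩ | ⟨a, ha⟩
  · exact (Nat.find_min hyW j.2 (by rw [hj] at hyk; exact hyk)).elim
  refine ⟨_, hNk, a, ?_, ha⟩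
  rcases (isChain_Iic _).total ha.1 hyk with hay | hya
  · exact hay.trans_lt hys
  rcases hya.eq_or_lt with rfl | hya
  · exact hys
  obtain ⟨j, hj⟩ := ha.2.1.1 y hya
  exact (Nat.find_min hyW j.2 hj).elim

theorem mem_lowerClosure_range_of_forall_lt (he : Function.Surjective e)
    (hW : ∀ j k, ¬W j < W k) {s : V}
    (hs : ∀ x < s, ∃ y ∈ lowerClosure (Set.range W), x < y ∧ y < s) :
    s ∈ lowerClosure (Set.range W) := by
  rw [mem_lowerClosure_range]
  by_contra! hsW
  have hWs : ∀ j, ¬W j < s := fun j hjs => by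
    obtain ⟨y, hyW, hjy, -⟩ := hs _ hjs
    obtain ⟨k, hyk⟩ := mem_lowerClosure_range.1 hyW
    exact hW j k (hjy.trans_le hyk)
  obtain ⟨ms, rfl⟩ := he s
  set S := {k | ∃ a < e ms, IsBranchStart e (fun j : Fin k => W j) a (W k)}
  have hS : S.Infinite := Set.infinite_of_forall_exists_gt fun N =>
    (exists_gt_isBranchStart_lt hstep hs hsW N).imp fun k ⟨hk, hkS⟩ => ⟨hkS, hk⟩
  have hsettle : ∀ k ∈ S, ∃ m ≤ ms, (e m ≤ W k ∨ W k ≤ e m) ∧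
      ∃ a < e ms, IsFreshPoint (fun j : Fin k => W j) a ∧ a < e m := fun k ⟨a, has, ha⟩ =>
    (ha.2.2 ms has).imp fun m ⟨hm, ham, hcomp⟩ => ⟨hm, hcomp, a, has, ha.2.1, ham⟩
  choose! m hm using hsettle
  -- no later fresh point below `e ms` lies below a point settled at stage `k`, so the stages
  -- of `S` settle pairwise different points `e m` with `m ≤ ms`
  have hinj : Set.InjOn m S := by
    have key : ∀ k ∈ S, ∀ k' ∈ S, k < k' → m k ≠ m k' := fun k hk k' hk' hkk' hmm => by
      obtain ⟨-, -, a, has, ha, ham⟩ := hm k' hk'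
      exact ha.not_lt_of_comparable hWs hkk' (hmm ▸ (hm k hk).2.1) has (hmm ▸ ham)
    intro k hk k' hk' hmm
    rcases lt_trichotomy k k' with h | h | h
    exacts [(key k hk k' hk' h hmm).elim, h, (key k' hk' k hk h hmm.symm).elim]
  exact (Set.finite_Iic ms).not_infinite
    (Set.infinite_of_injOn_mapsTo hinj (fun k hk => (hm k hk).1) hS)

theorem closedInitialSegment_lowerClosure (he : Function.Surjective e)
    (hW : ∀ j k, ¬W j < W k) : ClosedInitialSegment (lowerClosure (Set.range W) : Set V) := by
  refine ⟨(lowerClosure _).lower, fun C hCW _ s hs => ?_⟩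
  by_cases hsC : s ∈ C
  · exact hCW hsC
  refine mem_lowerClosure_range_of_forall_lt hstep he hW fun x hx => ?_
  obtain ⟨c, hc, hxc, hcs⟩ := exists_lt_mem_of_isLUB hs hsC hx
  exact ⟨c, hCW hc, hxc, hcs⟩

end Closed

theorem BoundedTree.exists_isMax_seq {T : Type} [Preorder T] [Nonempty T] [Countable T]
    (hT : BoundedTree T) : ∃ M : ℕ → T, (∀ i, IsMax (M i)) ∧ ∀ x, ∃ i, x ≤ M i := by
  obtain ⟨t, -, ht⟩ := hT (Classical.arbitrary T)
  have : Nonempty {t : T // IsMax t} := ⟨⟨t, ht⟩⟩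
  obtain ⟨F, hF⟩ := exists_surjective_nat {t : T // IsMax t}
  refine ⟨fun i => F i, fun i => (F i).2, fun x => ?_⟩
  obtain ⟨t, hxt, ht⟩ := hT x
  obtain ⟨i, hi⟩ := hF ⟨t, ht⟩
  exact ⟨i, by simpa only [hi] using hxt⟩

/-- if `V` is a nonempty countable bounded binary healthy tree of height
`α + 1` (`α` a countable ordinal), then every nonempty countable bounded binary tree of
height `≤ α + 1` embeds into `V` as a closed initial segment. -/
theorem embeds_into_healthy_tree (α : Ordinal) (hα : α.card ≤ Cardinal.aleph0)
    (V : Type) [SemilatticeInf V] [∀ t : V, IsWellOrder {x : V // x < t} (· < ·)]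
    [Nonempty V] [Countable V]
    (hVbin : BinaryOrderTree V) (hVbd : BoundedTree V) (hVheight : treeHeight V = α + 1)
    (hVhealthy : HealthyTree V)
    (T : Type) [SemilatticeInf T] [∀ t : T, IsWellOrder {x : T // x < t} (· < ·)]
    [Nonempty T] [Countable T]
    (hTbin : BinaryOrderTree T) (hTbd : BoundedTree T) (hTheight : treeHeight T ≤ α + 1) :
    ∃ f : T → V, InfEmbedding f ∧ ClosedInitialSegment (Set.range f) := by
  obtain ⟨M, hMmax, hM⟩ := hTbd.exists_isMax_seq
  obtain ⟨e, he⟩ := exists_surjective_nat V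
  have hMV : ∀ i, treeHt (M i) < treeHeight V := fun i =>
    (treeHt_lt_treeHeight (M i)).trans_le (hTheight.trans hVheight.ge)
  have hadm := isAdmissible_branchSeq e M hTbin hVhealthy hMmax hMV
  have hMW : ∀ j k, treeHt (branchSeq e M j ⊓ branchSeq e M k) = treeHt (M j ⊓ M k) :=
    fun j k => treeHt_inf_eq_of_isAdmissible e M (hadm j) (hadm k)
  refine ⟨transport M (branchSeq e M) hM, infEmbedding_transport hM hMW, ?_⟩
  rw [range_transport hM hMW]
  exact closedInitialSegment_lowerClosure (fun n => (hadm n).2.2) he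
    (not_lt_of_treeHt_inf_eq hMW hMmax)
end

section
/- Let U and V be healthy binary trees of height ω₁ with all levels countable, and let (U_α)_{α<ω₁} and (V_α)_{α<ω₁} be their natural decompositions (U_α = {x ∈ U : the order type of {y : y < x} is ≤ α}, with inclusions as bonding arrows, and similarly for V), and assume both are Fraïssé sequences in 𝔗₂. If there exist an increasing map φ : ω₁ → ω₁ and 𝔗₂-arrows f_α : U_α → V_{φ(α)} such that for all α ≤ β < ω₁ the map f_β restricted to U_α coincides with f_α (composed with the inclusion V_{φ(α)} ⊆ V_{φ(β)}), then U and V are isomorphic as partially ordered sets. -/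
/-- A tree is binary if every element has at most two immediate successors. -/
def BinaryTree' (T : Type) [Preorder T] : Prop :=
  ∀ t a b c : T, ImmSucc t a → ImmSucc t b → ImmSucc t c → a = b ∨ a = c ∨ b = c

/-- An arrow of the category `𝔗₂`: a meet-semilattice embedding whose image is a closed
initial segment of the codomain. -/
def IsT2Arrow {T V : Type} [SemilatticeInf T] [SemilatticeInf V] (f : T → V) : Prop :=
  InfEmbedding f ∧ ClosedInitialSegment (Set.range f)

lemma treeHt_mono {T : Type} [SemilatticeInf T]
    [∀ t : T, IsWellOrder {x : T // x < t} (· < ·)] {a b : T} (h : a ≤ b) :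
    treeHt a ≤ treeHt b :=
  RelEmbedding.ordinal_type_le
    ⟨⟨fun x => ⟨x.1, lt_of_lt_of_le x.2 h⟩,
      fun x y hxy => by
        apply Subtype.ext
        simpa [Subtype.ext_iff] using hxy⟩, Iff.rfl⟩

/-- `U_α`: the set of elements of the tree `U` whose set of predecessors has order type
`≤ α`.  These are the entries of the natural decomposition of `U`. -/
def levelSeg (U : Type) [SemilatticeInf U]
    [∀ t : U, IsWellOrder {x : U // x < t} (· < ·)] (α : Ordinal) : Set U :=
  {x : U | treeHt x ≤ α}

instance levelSeg.instSemilatticeInf (U : Type) [SemilatticeInf U]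
    [∀ t : U, IsWellOrder {x : U // x < t} (· < ·)] (α : Ordinal) :
    SemilatticeInf (levelSeg U α) :=
  { (inferInstance : PartialOrder (levelSeg U α)) with
    inf := fun a b => ⟨a.1 ⊓ b.1, le_trans (treeHt_mono inf_le_left) a.2⟩
    inf_le_left := fun a b => show a.1 ⊓ b.1 ≤ a.1 from inf_le_left
    inf_le_right := fun a b => show a.1 ⊓ b.1 ≤ b.1 from inf_le_right
    le_inf := fun a b c h1 h2 => show a.1 ≤ b.1 ⊓ c.1 from le_inf h1 h2 }

/-- The natural decomposition `(U_α)_{α<ω₁}` of `U` is a Fraïssé sequence in `𝔗₂`: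
condition (U) and condition (A). -/
def NatDecompIsFraisse (U : Type) [SemilatticeInf U]
    [∀ t : U, IsWellOrder {x : U // x < t} (· < ·)] : Prop :=
  (∀ (T : Type) (_ : SemilatticeInf T) (_ : ∀ t : T, IsWellOrder {x : T // x < t} (· < ·))
      (_ : Nonempty T) (_ : Countable T), BinaryTree' T → BoundedTree T →
    ∃ α : Ordinal, α < (Cardinal.aleph 1).ord ∧
      ∃ g : T → U, InfEmbedding g ∧ Set.range g ⊆ levelSeg U α ∧
        ClosedInitialSegment (Set.range g)) ∧
  (∀ α : Ordinal, α < (Cardinal.aleph 1).ord →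
    ∀ (Y : Type) (_ : SemilatticeInf Y) (_ : ∀ t : Y, IsWellOrder {x : Y // x < t} (· < ·))
      (_ : Nonempty Y) (_ : Countable Y), BinaryTree' Y → BoundedTree Y →
    ∀ f : levelSeg U α → Y, IsT2Arrow f →
      ∃ β : Ordinal, α ≤ β ∧ β < (Cardinal.aleph 1).ord ∧
        ∃ g : Y → U, InfEmbedding g ∧ Set.range g ⊆ levelSeg U β ∧
          ClosedInitialSegment (Set.range g) ∧ ∀ x : levelSeg U α, g (f x) = x.1)

/-! The compatible arrows `f_α` glue to a single order embedding `F : U → V` whose image is a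
closed initial segment of `V`: it is a lower set because each `range f_α` is, and a chain in it
with supremum `s` already lies in `range f_α` for `α` the height of `s`, since `F` preserves
heights. An embedding of a tree in which every node splits into a binary tree with such an image
is onto, by well-founded induction on `V`: an immediate successor of `F x` must be one of the
two images of the immediate successors of `x`, and any other node is the supremum of its
predecessors. -/

section Tree

variable {T : Type} [SemilatticeInf T] [∀ t : T, IsWellOrder {x : T // x < t} (· < ·)]

theorem tree_wellFoundedLT : WellFoundedLT T := by
  refine ⟨⟨fun v => ⟨v, fun y hy => ?_⟩⟩⟩
  have acc_pred : ∀ z : {x : T // x < v}, Acc (· < ·) z.1 := fun z =>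
    IsWellFounded.induction (· < ·) (motive := fun z : {x : T // x < v} => Acc (· < ·) z.1) z
      fun w ih => ⟨w.1, fun y hy => ih ⟨y, hy.trans w.2⟩ hy⟩
  exact acc_pred ⟨y, hy⟩

theorem tree_isChain_Iio (v : T) : IsChain (· ≤ ·) (Set.Iio v) := by
  intro a ha b hb _
  rcases trichotomous (r := ((· < ·) : {x : T // x < v} → {x : T // x < v} → Prop))
    ⟨a, ha⟩ ⟨b, hb⟩ with h | h | h
  · exact Or.inl (le_of_lt h)
  · exact Or.inl (congrArg Subtype.val h).le
  · exact Or.inr (le_of_lt h)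

theorem treeHt_lt_treeHeight_s19 (x : T) : treeHt x < treeHeight T :=
  Ordinal.lt_iSup_add_one _ x

theorem nonempty_of_treeHeight_ne_zero (h : treeHeight T ≠ 0) : Nonempty T := by
  by_contra hT
  exact h (nonpos_iff_eq_zero.1 (Ordinal.iSup_add_one_le_iff.2 fun t => (hT ⟨t⟩).elim))

theorem HealthyTree.not_isMax (hT : HealthyTree T) (hlim : Order.IsSuccLimit (treeHeight T))
    (t : T) : ¬IsMax t := by
  intro ht
  obtain ⟨s, hts, hs⟩ := hT.2 t (Order.succ (treeHt t)) (hlim.succ_lt (treeHt_lt_treeHeight_s19 t))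
  rw [le_antisymm (ht hts) hts] at hs
  exact (Order.lt_succ (treeHt t)).not_ge hs

theorem treeHt_map_eq {S : Type} [SemilatticeInf S]
    [∀ s : S, IsWellOrder {x : S // x < s} (· < ·)] (F : S ↪o T)
    (hF : IsLowerSet (Set.range F)) (x : S) : treeHt (F x) = treeHt x := by
  let restrict : ((· < ·) : {y : S // y < x} → {y : S // y < x} → Prop) ↪r
      ((· < ·) : {z : T // z < F x} → {z : T // z < F x} → Prop) :=
    ⟨⟨fun y => ⟨F y, F.lt_iff_lt.2 y.2⟩, fun y y' h => Subtype.ext (F.injective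
      (congrArg Subtype.val h))⟩, fun {y y'} => F.lt_iff_lt⟩
  have restrict_surjective : Function.Surjective restrict := by
    rintro ⟨z, hz⟩
    obtain ⟨y, rfl⟩ := hF hz.le ⟨x, rfl⟩
    exact ⟨⟨y, F.lt_iff_lt.1 hz⟩, rfl⟩
  exact (Ordinal.type_eq.2 ⟨RelIso.ofSurjective restrict restrict_surjective⟩).symm

end Tree

theorem ImmSucc.map {S T : Type} [Preorder S] [Preorder T] {x a : S} (h : ImmSucc x a)
    (F : S ↪o T) (hF : IsLowerSet (Set.range F)) : ImmSucc (F x) (F a) := by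
  refine ⟨F.lt_iff_lt.2 h.1, fun z hxz hza => ?_⟩
  obtain ⟨y, rfl⟩ := hF hza.le ⟨a, rfl⟩
  exact h.2 y (F.lt_iff_lt.1 hxz) (F.lt_iff_lt.1 hza)

theorem isLUB_Iio_of_forall_not_immSucc {T : Type} [SemilatticeInf T] {v : T}
    (h : ∀ w, ¬ImmSucc w v) : IsLUB (Set.Iio v) v := by
  refine ⟨fun _ => le_of_lt, fun z hz => ?_⟩
  by_contra hvz
  have hlt : v ⊓ z < v := inf_lt_left.2 hvz
  obtain ⟨y, hy, hyv⟩ : ∃ y, v ⊓ z < y ∧ y < v := by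
    by_contra! hno
    exact h _ ⟨hlt, fun y h1 h2 => (hno y h1) h2⟩
  exact hy.not_ge (le_inf hyv.le (hz hyv))

theorem OrderEmbedding.surjective_of_closedInitialSegment_range {S T : Type} [Preorder S]
    [Nonempty S] [SemilatticeInf T] [∀ t : T, IsWellOrder {x : T // x < t} (· < ·)]
    (hS : ∀ x : S, ∃ a b : S, a ≠ b ∧ ImmSucc x a ∧ ImmSucc x b) (hT : BinaryTree' T)
    (F : S ↪o T) (hF : ClosedInitialSegment (Set.range F)) : Function.Surjective F := by
  have := tree_wellFoundedLT (T := T)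
  intro v
  induction v using WellFoundedLT.induction with
  | _ v ih =>
    by_cases hsucc : ∃ w, ImmSucc w v
    · obtain ⟨w, hwv⟩ := hsucc
      obtain ⟨x, rfl⟩ := ih w hwv.1
      obtain ⟨a, b, hab, ha, hb⟩ := hS x
      rcases hT (F x) v (F a) (F b) hwv (ha.map F hF.1) (hb.map F hF.1) with h | h | h
      · exact ⟨a, h.symm⟩
      · exact ⟨b, h.symm⟩
      · exact (hab (F.injective h)).elim
    · push Not at hsucc
      exact hF.2 _ (fun y hy => ih y hy) (tree_isChain_Iio v) v
        (isLUB_Iio_of_forall_not_immSucc hsucc)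

section Glue

variable {U V : Type} [SemilatticeInf U] [∀ t : U, IsWellOrder {x : U // x < t} (· < ·)]
  {κ : Ordinal}
  (f : ∀ α : Ordinal, α < κ → levelSeg U α → V) (hU : ∀ x : U, treeHt x < κ)

/-- The union of a coherent family of maps `f α : U_α → V`. -/
noncomputable def glueLevelSegs (x : U) : V :=
  f (treeHt x) (hU x) ⟨x, (le_rfl : treeHt x ≤ treeHt x)⟩

variable {f} (hcoh : ∀ (α β : Ordinal) (hα : α < κ) (hβ : β < κ) (hαβ : α ≤ β)
  (x : levelSeg U α),
    f β hβ ⟨x.1, le_trans (show treeHt x.1 ≤ α from x.2) hαβ⟩ = f α hα x)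
include hcoh

theorem apply_eq_glueLevelSegs {α : Ordinal} (hα : α < κ) {x : U} (hx : treeHt x ≤ α) :
    f α hα ⟨x, hx⟩ = glueLevelSegs f hU x :=
  hcoh (treeHt x) α (hU x) hα hx ⟨x, (le_rfl : treeHt x ≤ treeHt x)⟩

variable [SemilatticeInf V]

theorem glueLevelSegs_le_glueLevelSegs_iff (hemb : ∀ α hα, InfEmbedding (f α hα)) (x y : U) :
    glueLevelSegs f hU x ≤ glueLevelSegs f hU y ↔ x ≤ y := by
  have hγ : max (treeHt x) (treeHt y) < κ := max_lt (hU x) (hU y)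
  rw [← apply_eq_glueLevelSegs hU hcoh hγ (le_max_left _ _),
    ← apply_eq_glueLevelSegs hU hcoh hγ (le_max_right _ _), (hemb _ hγ).1]
  exact Subtype.mk_le_mk

noncomputable def glueEmbedding (hemb : ∀ α hα, InfEmbedding (f α hα)) : U ↪o V :=
  OrderEmbedding.ofMapLEIff (glueLevelSegs f hU) (glueLevelSegs_le_glueLevelSegs_iff hU hcoh hemb)

variable (hemb : ∀ α hα, InfEmbedding (f α hα))

theorem range_subset_range_glueEmbedding {α : Ordinal} (hα : α < κ) :
    Set.range (f α hα) ⊆ Set.range (glueEmbedding hU hcoh hemb) := by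
  rintro _ ⟨x, rfl⟩
  exact ⟨x.1, (apply_eq_glueLevelSegs hU hcoh hα x.2).symm⟩

theorem isLowerSet_range_glueEmbedding
    (hcl : ∀ α hα, ClosedInitialSegment (Set.range (f α hα))) :
    IsLowerSet (Set.range (glueEmbedding hU hcoh hemb)) := by
  rintro v w hwv ⟨x, rfl⟩
  have hx := apply_eq_glueLevelSegs hU hcoh (hU x) le_rfl
  exact range_subset_range_glueEmbedding hU hcoh hemb (hU x)
    ((hcl _ (hU x)).1 (hwv.trans_eq hx.symm) ⟨_, rfl⟩)

theorem closedInitialSegment_range_glueEmbedding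
    [∀ t : V, IsWellOrder {x : V // x < t} (· < ·)]
    (hcl : ∀ α hα, ClosedInitialSegment (Set.range (f α hα)))
    (hV : ∀ v : V, treeHt v < κ) :
    ClosedInitialSegment (Set.range (glueEmbedding hU hcoh hemb)) := by
  let F := glueEmbedding hU hcoh hemb
  have hlow : IsLowerSet (Set.range F) := isLowerSet_range_glueEmbedding hU hcoh hemb hcl
  refine ⟨hlow, fun C hC hchain s hs => ?_⟩
  have hCs : C ⊆ Set.range (f (treeHt s) (hV s)) := by
    intro c hc
    obtain ⟨x, rfl⟩ := hC hc
    have hx : treeHt x ≤ treeHt s := treeHt_map_eq F hlow x ▸ treeHt_mono (hs.1 hc)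
    exact ⟨⟨x, hx⟩, apply_eq_glueLevelSegs hU hcoh (hV s) hx⟩
  exact range_subset_range_glueEmbedding hU hcoh hemb (hV s)
    ((hcl _ (hV s)).2 C hCs hchain s hs)

end Glue

/-- if the natural decompositions of two healthy binary trees `U`, `V` of
height `ω₁` with countable levels are Fraïssé sequences in `𝔗₂` and there is a morphism of
sequences from the one to the other (an increasing map `φ` together with compatible
`𝔗₂`-arrows `f_α : U_α → V_{φ(α)}`), then `U` and `V` are isomorphic as partially ordered
sets. -/
theorem trees_isomorphic_of_seq_morphism
    (U : Type) [SemilatticeInf U] [∀ t : U, IsWellOrder {x : U // x < t} (· < ·)]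
    (V : Type) [SemilatticeInf V] [∀ t : V, IsWellOrder {x : V // x < t} (· < ·)]
    (hUbin : BinaryTree' U) (hUhealthy : HealthyTree U)
    (hUheight : treeHeight U = (Cardinal.aleph 1).ord)
    (hUlevels : ∀ β : Ordinal, Set.Countable {x : U | treeHt x = β})
    (hVbin : BinaryTree' V) (hVhealthy : HealthyTree V)
    (hVheight : treeHeight V = (Cardinal.aleph 1).ord)
    (hVlevels : ∀ β : Ordinal, Set.Countable {x : V | treeHt x = β})
    (hUF : NatDecompIsFraisse U) (hVF : NatDecompIsFraisse V)
    (φ : Ordinal → Ordinal) (hφmono : Monotone φ)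
    (hφ : ∀ α : Ordinal, α < (Cardinal.aleph 1).ord → φ α < (Cardinal.aleph 1).ord)
    (f : ∀ α : Ordinal, α < (Cardinal.aleph 1).ord → (levelSeg U α → V))
    (hf : ∀ (α : Ordinal) (hα : α < (Cardinal.aleph 1).ord),
      InfEmbedding (f α hα) ∧ Set.range (f α hα) ⊆ levelSeg V (φ α) ∧
        ClosedInitialSegment (Set.range (f α hα)))
    (hcoh : ∀ (α β : Ordinal) (hα : α < (Cardinal.aleph 1).ord)
      (hβ : β < (Cardinal.aleph 1).ord) (hαβ : α ≤ β) (x : levelSeg U α),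
      f β hβ ⟨x.1, show x.1 ∈ levelSeg U β from
        le_trans (show treeHt x.1 ≤ α from x.2) hαβ⟩ = f α hα x) :
    Nonempty (U ≃o V) := by
  have hlim : Order.IsSuccLimit (Cardinal.aleph 1).ord :=
    Cardinal.isSuccLimit_ord (Cardinal.aleph0_le_aleph 1)
  have hU : ∀ x : U, treeHt x < (Cardinal.aleph 1).ord := hUheight ▸ treeHt_lt_treeHeight_s19
  have hV : ∀ v : V, treeHt v < (Cardinal.aleph 1).ord := hVheight ▸ treeHt_lt_treeHeight_s19
  have : Nonempty U := nonempty_of_treeHeight_ne_zero (hUheight ▸ hlim.ne_bot)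
  have hsplit (x : U) : ∃ a b : U, a ≠ b ∧ ImmSucc x a ∧ ImmSucc x b :=
    hUhealthy.1 x (hUhealthy.not_isMax (hUheight ▸ hlim) x)
  have hemb α hα := (hf α hα).1
  let F := glueEmbedding hU hcoh hemb
  have hF := closedInitialSegment_range_glueEmbedding hU hcoh hemb
    (fun α hα => (hf α hα).2.2) hV
  exact ⟨OrderIso.ofSurjective F (F.surjective_of_closedInitialSegment_range hsplit hVbin hF)⟩
end
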